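/- arXiv:2001.00328 — 9 statements merged into one kernel-verified Lean document; each statement's English description precedes it below -/
import Mathlib

section
/- Let R be a ring with identity and a, b ∈ R. Then ab is quasinilpotent if and only if ba is quasinilpotent. -/
def Quasinilpotent {R : Type*} [Ring R] (q : R) : Prop :=
  ∀ x : R, q * x = x * q → IsUnit (1 + q * x)

def InDoubleCommutant {R : Type*} [Ring R] (x a : R) : Prop :=
  ∀ y : R, y * a = a * y → x * y = y * x

def HasGnsDrazin {R : Type*} [Ring R] (n : ℕ) (a : R) : Prop :=
  ∃ x : R, x * a * x = x ∧ InDoubleCommutant x a ∧ Quasinilpotent (a ^ n - a * x)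

private lemma jacobson {R : Type*} [Ring R] (x y : R) (h : IsUnit (1 - x * y)) :
    IsUnit (1 - y * x) := by
  refine ⟨⟨1 - y * x, 1 + y * h.unit.inv * x, ?_, ?_⟩, rfl⟩
  · calc
      (1 - y * x) * (1 + y * (IsUnit.unit h).inv * x) =
          1 - y * x + y * ((1 - x * y) * h.unit.inv) * x := by noncomm_ring
      _ = 1 := by simp only [Units.inv_eq_val_inv, IsUnit.mul_val_inv, mul_one, sub_add_cancel]
  · calc
      (1 + y * (IsUnit.unit h).inv * x) * (1 - y * x) =
          1 - y * x + y * (h.unit.inv * (1 - x * y)) * x := by noncomm_ring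
      _ = 1 := by simp only [Units.inv_eq_val_inv, IsUnit.val_inv_mul, mul_one, sub_add_cancel]

private lemma jacobson' {R : Type*} [Ring R] (x y : R) (h : IsUnit (1 + x * y)) :
    IsUnit (1 + y * x) := by
  have := jacobson x (-y) (by simpa using h)
  simpa using this

/-- If a product of two commuting elements is a unit, each factor is a unit. -/
private lemma isUnit_of_commute_mul {R : Type*} [Ring R] (A B : R) (hc : A * B = B * A)
    (h : IsUnit (A * B)) : IsUnit A := by
  obtain ⟨u, hu⟩ := h
  have huA : (u : R) * A = A * (u : R) := by rw [hu, mul_assoc, ← hc]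
  refine ⟨⟨A, B * ↑u⁻¹, ?_, ?_⟩, rfl⟩
  · rw [← mul_assoc, ← hu, u.mul_inv]
  · calc B * ↑u⁻¹ * A = B * (↑u⁻¹ * A) := by rw [mul_assoc]
      _ = B * (A * ↑u⁻¹) := by
          congr 1
          calc (↑u⁻¹ : R) * A = ↑u⁻¹ * A * (↑u * ↑u⁻¹) := by rw [u.mul_inv, mul_one]
            _ = ↑u⁻¹ * (A * ↑u) * ↑u⁻¹ := by noncomm_ring
            _ = ↑u⁻¹ * (↑u * A) * ↑u⁻¹ := by rw [huA]
            _ = A * ↑u⁻¹ := by rw [← mul_assoc, u.inv_mul, one_mul]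
      _ = (B * A) * ↑u⁻¹ := by rw [← mul_assoc]
      _ = 1 := by rw [← hc, ← hu, u.mul_inv]

private lemma qn_mul_mp {R : Type*} [Ring R] (a b : R) (h : Quasinilpotent (a * b)) :
    Quasinilpotent (b * a) := by
  intro x hx
  -- key: for any z commuting with b*a, 1 + (b*a)^2 * z is a unit
  have key : ∀ z : R, b * a * z = z * (b * a) → IsUnit (1 + (b * a) * ((b * a) * z)) := by
    intro z hz
    have hcomm : (a * b) * (a * z * b) = (a * z * b) * (a * b) := by
      calc (a * b) * (a * z * b) = a * ((b * a) * z) * b := by noncomm_ring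
        _ = a * (z * (b * a)) * b := by rw [hz]
        _ = (a * z * b) * (a * b) := by noncomm_ring
    have h1 : IsUnit (1 + (a * b) * (a * z * b)) := h _ hcomm
    have h2 : IsUnit (1 + a * (b * (a * z * b))) := by
      convert h1 using 2; noncomm_ring
    have h3 := jacobson' a (b * (a * z * b)) h2
    convert h3 using 2
    calc b * a * (b * a * z) = b * (a * (b * (a * z))) := by noncomm_ring
      _ = b * (a * (b * a * z)) := by noncomm_ring
      _ = b * (a * (z * (b * a))) := by rw [hz]
      _ = b * (a * z * b) * a := by noncomm_ring
  -- x² commutes with b*a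
  have hx2 : b * a * (-(x * x)) = -(x * x) * (b * a) := by
    have : b * a * (x * x) = x * x * (b * a) := by
      calc b * a * (x * x) = (b * a * x) * x := by noncomm_ring
        _ = (x * (b * a)) * x := by rw [hx]
        _ = x * (b * a * x) := by rw [mul_assoc]
        _ = x * (x * (b * a)) := by rw [hx]
        _ = x * x * (b * a) := by rw [mul_assoc]
    calc b * a * -(x * x) = -(b * a * (x * x)) := by noncomm_ring
      _ = -(x * x * (b * a)) := by rw [this]
      _ = -(x * x) * (b * a) := by noncomm_ring
  have hu : IsUnit (1 + (b * a) * ((b * a) * (-(x * x)))) := key _ hx2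
  -- (1 + bax)(1 - bax) = 1 - (ba)²x²
  have hfact : (1 + b * a * x) * (1 - b * a * x) = 1 + (b * a) * ((b * a) * (-(x * x))) := by
    have hba : b * a * x = x * (b * a) := hx
    calc (1 + b * a * x) * (1 - b * a * x)
        = 1 - (b * a * x) * (b * a * x) := by noncomm_ring
      _ = 1 - (b * a) * ((x * (b * a)) * x) := by noncomm_ring
      _ = 1 - (b * a) * ((b * a * x) * x) := by rw [← hba]
      _ = 1 + (b * a) * ((b * a) * (-(x * x))) := by noncomm_ring
  have hcAB : (1 + b * a * x) * (1 - b * a * x) = (1 - b * a * x) * (1 + b * a * x) := by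
    noncomm_ring
  exact isUnit_of_commute_mul _ _ hcAB (hfact ▸ hu)

theorem stmt0 {R : Type*} [Ring R] (a b : R) :
    Quasinilpotent (a * b) ↔ Quasinilpotent (b * a) :=
  ⟨qn_mul_mp a b, qn_mul_mp b a⟩
end

section
/- Let R be a ring with identity and a, b ∈ R. If 1 − ab has a generalized n-strongly Drazin inverse, then 1 − ba has a generalized n-strongly Drazin inverse. -/
/-- Jacobson's lemma for units. -/
theorem jacUnitAux {R : Type*} [Ring R] (A B : R) (h : IsUnit (1 + A * B)) :
    IsUnit (1 + B * A) := by
  obtain ⟨u, hu⟩ := h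
  have h3 : (1 + A * B) * (↑u⁻¹ : R) = 1 := by rw [← hu]; exact u.mul_inv
  have h4 : (↑u⁻¹ : R) * (1 + A * B) = 1 := by rw [← hu]; exact u.inv_mul
  have key : A * B * (↑u⁻¹ : R) = 1 - ↑u⁻¹ := by
    have h5 : (↑u⁻¹ : R) + A * B * ↑u⁻¹ = 1 := by
      calc (↑u⁻¹ : R) + A * B * ↑u⁻¹ = (1 + A * B) * ↑u⁻¹ := by noncomm_ring
        _ = 1 := h3
    exact eq_sub_of_add_eq' h5
  have key2 : (↑u⁻¹ : R) * (A * B) = 1 - ↑u⁻¹ := by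
    have h5 : (↑u⁻¹ : R) + ↑u⁻¹ * (A * B) = 1 := by
      calc (↑u⁻¹ : R) + ↑u⁻¹ * (A * B) = (↑u⁻¹ : R) * (1 + A * B) := by noncomm_ring
        _ = 1 := h4
    exact eq_sub_of_add_eq' h5
  refine isUnit_iff_exists.mpr ⟨1 - B * ↑u⁻¹ * A, ?_, ?_⟩
  · calc (1 + B * A) * (1 - B * ↑u⁻¹ * A)
        = 1 + B * A - B * ↑u⁻¹ * A - B * (A * B * ↑u⁻¹) * A := by noncomm_ring
      _ = 1 + B * A - B * ↑u⁻¹ * A - B * (1 - ↑u⁻¹) * A := by rw [key]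
      _ = 1 := by noncomm_ring
  · calc (1 - B * ↑u⁻¹ * A) * (1 + B * A)
        = 1 + B * A - B * ↑u⁻¹ * A - B * (↑u⁻¹ * (A * B)) * A := by noncomm_ring
      _ = 1 + B * A - B * ↑u⁻¹ * A - B * (1 - ↑u⁻¹) * A := by rw [key2]
      _ = 1 := by noncomm_ring

/-- Jacobson's lemma for quasinilpotents. -/
theorem quasiSwapAux {R : Type*} [Ring R] (A B : R) (h : Quasinilpotent (A * B)) :
    Quasinilpotent (B * A) := by
  intro t ht
  have e1 : B * A * (t * t) = (t * t) * (B * A) := by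
    calc B * A * (t * t) = (B * A * t) * t := by noncomm_ring
      _ = (t * (B * A)) * t := by rw [ht]
      _ = t * (B * A * t) := by noncomm_ring
      _ = t * (t * (B * A)) := by rw [ht]
      _ = (t * t) * (B * A) := by noncomm_ring
  have e2 : (A * t * B) * (A * t * B) = (A * B) * (A * (t * t) * B) := by
    calc (A * t * B) * (A * t * B) = A * (t * (B * A * t)) * B := by noncomm_ring
      _ = A * (t * (t * (B * A))) * B := by rw [ht]
      _ = A * ((t * t) * (B * A)) * B := by noncomm_ring
      _ = A * (B * A * (t * t)) * B := by rw [← e1]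
      _ = (A * B) * (A * (t * t) * B) := by noncomm_ring
  have e3 : (A * (t * t) * B) * (A * B) = (A * B) * (A * (t * t) * B) := by
    calc (A * (t * t) * B) * (A * B) = A * ((t * t) * (B * A)) * B := by noncomm_ring
      _ = A * (B * A * (t * t)) * B := by rw [← e1]
      _ = (A * B) * (A * (t * t) * B) := by noncomm_ring
  have hc : (A * B) * (-(A * (t * t) * B)) = (-(A * (t * t) * B)) * (A * B) := by
    calc (A * B) * (-(A * (t * t) * B)) = -((A * B) * (A * (t * t) * B)) := by noncomm_ring
      _ = -((A * (t * t) * B) * (A * B)) := by rw [e3]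
      _ = (-(A * (t * t) * B)) * (A * B) := by noncomm_ring
  have hu := h (-(A * (t * t) * B)) hc
  obtain ⟨w, hw⟩ := hu
  have hw2 : (w : R) = 1 - (A * t * B) * (A * t * B) := by
    rw [hw, e2]; noncomm_ring
  have cYw : Commute (A * t * B) (w : R) := by
    rw [hw2]
    exact (Commute.one_right _).sub_right ((Commute.refl _).mul_right (Commute.refl _))
  have cYwi : Commute (A * t * B) ((↑w⁻¹ : R)) := cYw.units_inv_right
  have hprod : (1 + A * t * B) * (1 - A * t * B) = (w : R) := by rw [hw2]; noncomm_ring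
  have hprod' : (1 - A * t * B) * (1 + A * t * B) = (w : R) := by rw [hw2]; noncomm_ring
  have hU1 : IsUnit (1 + A * t * B) := by
    refine isUnit_iff_exists.mpr ⟨(1 - A * t * B) * (↑w⁻¹ : R), ?_, ?_⟩
    · rw [← mul_assoc, hprod]; exact w.mul_inv
    · have c1 : Commute (1 + A * t * B) ((↑w⁻¹ : R)) := (Commute.one_left _).add_left cYwi
      calc ((1 - A * t * B) * (↑w⁻¹ : R)) * (1 + A * t * B)
          = (1 - A * t * B) * ((↑w⁻¹ : R) * (1 + A * t * B)) := by rw [mul_assoc]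
        _ = (1 - A * t * B) * ((1 + A * t * B) * (↑w⁻¹ : R)) := by rw [← c1.eq]
        _ = ((1 - A * t * B) * (1 + A * t * B)) * (↑w⁻¹ : R) := by rw [← mul_assoc]
        _ = (w : R) * (↑w⁻¹ : R) := by rw [hprod']
        _ = 1 := w.mul_inv
  have h6 := jacUnitAux (A * t) B hU1
  have hfin : (1 : R) + B * (A * t) = 1 + B * A * t := by rw [← mul_assoc]
  rwa [hfin] at h6

theorem stmt2 {R : Type*} [Ring R] (n : ℕ) (a b : R)
    (h : HasGnsDrazin n (1 - a * b)) : HasGnsDrazin n (1 - b * a) := by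
  obtain ⟨x, hx1, hx2, hx3⟩ := h
  by_cases hn : n = 0
  · -- n = 0 : the classical Jacobson lemma for units
    subst hn
    rw [pow_zero] at hx3
    have hxα : x * (1 - a * b) = (1 - a * b) * x := hx2 _ rfl
    have hee : ((1 - a * b) * x) * ((1 - a * b) * x) = (1 - a * b) * x := by
      calc ((1 - a * b) * x) * ((1 - a * b) * x)
          = (1 - a * b) * (x * (1 - a * b) * x) := by noncomm_ring
        _ = (1 - a * b) * x := by rw [hx1]
    have hp0 : IsUnit ((1 - a * b) * x) := by
      have h5 := hx3 (-1) (by noncomm_ring)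
      have h6 : (1 : R) + (1 - (1 - a * b) * x) * (-1) = (1 - a * b) * x := by noncomm_ring
      rwa [h6] at h5
    obtain ⟨U, hU⟩ := hp0
    have hUi : ((1 - a * b) * x) * (↑U⁻¹ : R) = 1 := by rw [← hU]; exact U.mul_inv
    have hE1 : (1 - a * b) * x = 1 := by
      calc (1 - a * b) * x
          = ((1 - a * b) * x) * (((1 - a * b) * x) * (↑U⁻¹ : R)) := by rw [hUi, mul_one]
        _ = (((1 - a * b) * x) * ((1 - a * b) * x)) * (↑U⁻¹ : R) := by rw [← mul_assoc]
        _ = ((1 - a * b) * x) * (↑U⁻¹ : R) := by rw [hee]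
        _ = 1 := hUi
    have hxE1 : x * (1 - a * b) = 1 := by rw [hxα]; exact hE1
    have hβy : (1 - b * a) * (1 + b * x * a) = 1 := by
      calc (1 - b * a) * (1 + b * x * a) = 1 + b * ((1 - a * b) * x - 1) * a := by noncomm_ring
        _ = 1 + b * ((1 : R) - 1) * a := by rw [hE1]
        _ = 1 := by noncomm_ring
    have hyβ : (1 + b * x * a) * (1 - b * a) = 1 := by
      calc (1 + b * x * a) * (1 - b * a) = 1 + b * (x * (1 - a * b) - 1) * a := by noncomm_ring
        _ = 1 + b * ((1 : R) - 1) * a := by rw [hxE1]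
        _ = 1 := by noncomm_ring
    refine ⟨1 + b * x * a, ?_, ?_, ?_⟩
    · calc (1 + b * x * a) * (1 - b * a) * (1 + b * x * a)
          = 1 * (1 + b * x * a) := by rw [hyβ]
        _ = 1 + b * x * a := one_mul _
    · intro t ht
      calc (1 + b * x * a) * t
          = (1 + b * x * a) * (t * ((1 - b * a) * (1 + b * x * a))) := by rw [hβy, mul_one]
        _ = (1 + b * x * a) * ((t * (1 - b * a)) * (1 + b * x * a)) := by noncomm_ring
        _ = (1 + b * x * a) * (((1 - b * a) * t) * (1 + b * x * a)) := by rw [ht]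
        _ = ((1 + b * x * a) * (1 - b * a)) * (t * (1 + b * x * a)) := by noncomm_ring
        _ = 1 * (t * (1 + b * x * a)) := by rw [hyβ]
        _ = t * (1 + b * x * a) := one_mul _
    · rw [pow_zero, hβy, sub_self]
      intro z hz
      simp
  · obtain ⟨m, rfl⟩ : ∃ m, n = m + 1 := ⟨n - 1, (Nat.succ_pred_eq_of_pos (Nat.pos_of_ne_zero hn)).symm⟩
    set α := 1 - a * b with hαdef
    set β := 1 - b * a with hβdef
    have hxα : x * α = α * x := hx2 α rfl
    have cxα : Commute x α := hxα
    set e := α * x with hedef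
    set p := 1 - e with hpdef
    set q := α ^ (m + 1) - e with hqdef
    set S := ∑ i ∈ Finset.range (m + 1), α ^ i with hSdef
    -- basic commutation facts
    have cαe : Commute α e := by rw [hedef]; exact (Commute.refl α).mul_right cxα.symm
    have cxe : Commute x e := by rw [hedef]; exact cxα.mul_right (Commute.refl x)
    have cαp : Commute α p := by rw [hpdef]; exact (Commute.one_right α).sub_right cαe
    have cαq : Commute α q := by
      rw [hqdef]; exact ((Commute.refl α).pow_right (m + 1)).sub_right cαe
    have cαS : Commute α S := by
      rw [hSdef]; exact Commute.sum_right _ _ _ fun i _ => (Commute.refl α).pow_right i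
    have cxS : Commute x S := by
      rw [hSdef]; exact Commute.sum_right _ _ _ fun i _ => cxα.pow_right i
    have cSe : Commute S e := by rw [hedef]; exact (cαS.symm).mul_right (cxS.symm)
    have cSp : Commute S p := by rw [hpdef]; exact (Commute.one_right S).sub_right cSe
    have cSq : Commute S q := by
      rw [hqdef]; exact ((cαS.symm).pow_right (m + 1)).sub_right cSe
    have cep : Commute e p := by rw [hpdef]; exact (Commute.one_right e).sub_right (Commute.refl e)
    have cqp : Commute q p := by
      rw [hqdef]; exact (cαp.pow_left (m + 1)).sub_left cep
    -- basic identities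
    have he2 : e * e = e := by
      rw [hedef]
      calc α * x * (α * x) = α * (x * α * x) := by noncomm_ring
        _ = α * x := by rw [hx1]
    have hpp : p * p = p := by
      rw [hpdef]
      calc (1 - e) * (1 - e) = 1 - e - e + e * e := by noncomm_ring
        _ = 1 - e := by rw [he2]; noncomm_ring
    -- the unit u₂ = 1 - q*p and its inverse v
    have hu2 : IsUnit ((1 : R) - q * p) := by
      have h5 := hx3 (-p) (by rw [mul_neg, neg_mul, cqp.eq])
      have h6 : (1 : R) + q * (-p) = 1 - q * p := by noncomm_ring
      rwa [h6] at h5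
    obtain ⟨U, hU⟩ := hu2
    set v := (↑U⁻¹ : R) with hvdef
    have hUv : ((1 : R) - q * p) * v = 1 := by rw [hvdef, ← hU]; exact U.mul_inv
    have cαU : Commute α (U : R) := by
      rw [hU]; exact (Commute.one_right α).sub_right (cαq.mul_right cαp)
    have cαv : Commute α v := by rw [hvdef]; exact cαU.units_inv_right
    have cpU : Commute p (U : R) := by
      rw [hU]; exact (Commute.one_right p).sub_right ((cqp.symm).mul_right (Commute.refl p))
    have cpv : Commute p v := by rw [hvdef]; exact cpU.units_inv_right
    have cSU : Commute S (U : R) := by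
      rw [hU]; exact (Commute.one_right S).sub_right (cSq.mul_right cSp)
    have cSv : Commute S v := by rw [hvdef]; exact cSU.units_inv_right
    -- the element g
    set g := S * p * v with hgdef
    -- geometric sum identities
    have hG := geom_sum_mul α (m + 1)
    rw [← hSdef] at hG
    have cα1S : Commute (α - 1) S := cαS.sub_left (Commute.one_left S)
    have hgeom : (1 - α) * S = 1 - α ^ (m + 1) := by
      calc (1 - α) * S = -((α - 1) * S) := by noncomm_ring
        _ = -(S * (α - 1)) := by rw [cα1S.eq]
        _ = -(α ^ (m + 1) - 1) := by rw [hG]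
        _ = 1 - α ^ (m + 1) := by noncomm_ring
    have hgeom' : S * (1 - α) = 1 - α ^ (m + 1) := by
      calc S * (1 - α) = -(S * (α - 1)) := by noncomm_ring
        _ = -(α ^ (m + 1) - 1) := by rw [hG]
        _ = 1 - α ^ (m + 1) := by noncomm_ring
    have hpq' : (1 : R) - α ^ (m + 1) = p - q := by rw [hpdef, hqdef]; noncomm_ring
    have hA1 : (p - q) * p = p - q * p := by
      calc (p - q) * p = p * p - q * p := by noncomm_ring
        _ = p - q * p := by rw [hpp]
    have hA2 : ((1 : R) - q * p) * p = p - q * p := by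
      calc ((1 : R) - q * p) * p = p - q * (p * p) := by noncomm_ring
        _ = p - q * p := by rw [hpp]
    have tail : ((1 : R) - α ^ (m + 1)) * (p * v) = p := by
      calc ((1 : R) - α ^ (m + 1)) * (p * v) = ((1 - α ^ (m + 1)) * p) * v := by
            rw [← mul_assoc]
        _ = ((p - q) * p) * v := by rw [hpq']
        _ = (p - q * p) * v := by rw [hA1]
        _ = (((1 : R) - q * p) * p) * v := by rw [hA2]
        _ = ((1 : R) - q * p) * (p * v) := by rw [mul_assoc]
        _ = ((1 : R) - q * p) * (v * p) := by rw [cpv.eq]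
        _ = (((1 : R) - q * p) * v) * p := by rw [← mul_assoc]
        _ = 1 * p := by rw [hUv]
        _ = p := one_mul p
    have hαg : (1 - α) * g = p := by
      calc (1 - α) * g = ((1 - α) * S) * (p * v) := by rw [hgdef]; noncomm_ring
        _ = (1 - α ^ (m + 1)) * (p * v) := by rw [hgeom]
        _ = p := tail
    have c1αv : Commute (1 - α) v := (Commute.one_left v).sub_left cαv
    have c1αp : Commute (1 - α) p := (Commute.one_left p).sub_left cαp
    have hgα : g * (1 - α) = p := by
      calc g * (1 - α) = (S * p) * (v * (1 - α)) := by rw [hgdef]; noncomm_ring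
        _ = (S * p) * ((1 - α) * v) := by rw [← c1αv.eq]
        _ = S * ((p * (1 - α)) * v) := by noncomm_ring
        _ = S * (((1 - α) * p) * v) := by rw [← c1αp.eq]
        _ = (S * (1 - α)) * (p * v) := by noncomm_ring
        _ = (1 - α ^ (m + 1)) * (p * v) := by rw [hgeom']
        _ = p := tail
    have hpg : p * g = g := by
      calc p * g = ((p * S) * p) * v := by rw [hgdef]; noncomm_ring
        _ = ((S * p) * p) * v := by rw [← cSp.eq]
        _ = (S * (p * p)) * v := by rw [mul_assoc S p p]
        _ = (S * p) * v := by rw [hpp]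
        _ = g := by rw [hgdef]
    have hgp : g * p = g := by
      calc g * p = (S * p) * (v * p) := by rw [hgdef]; noncomm_ring
        _ = (S * p) * (p * v) := by rw [← cpv.eq]
        _ = (S * (p * p)) * v := by noncomm_ring
        _ = (S * p) * v := by rw [hpp]
        _ = g := by rw [hgdef]
    have hab : a * b = 1 - α := by rw [hαdef]; noncomm_ring
    have habg : (a * b) * g = p := by rw [hab]; exact hαg
    have hgab : g * (a * b) = p := by rw [hab]; exact hgα
    have habS : (a * b) * S = 1 - α ^ (m + 1) := by rw [hab]; exact hgeom
    -- the idempotent f and E = 1 - f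
    set f := b * g * a with hfdef
    have hf2 : f * f = f := by
      calc f * f = b * (g * ((a * b) * g)) * a := by rw [hfdef]; noncomm_ring
        _ = b * (g * p) * a := by rw [habg]
        _ = b * g * a := by rw [hgp]
        _ = f := by rw [hfdef]
    have hfba : f * (b * a) = b * p * a := by
      calc f * (b * a) = b * (g * (a * b)) * a := by rw [hfdef]; noncomm_ring
        _ = b * p * a := by rw [hgab]
    have hbaf : (b * a) * f = b * p * a := by
      calc (b * a) * f = b * ((a * b) * g) * a := by rw [hfdef]; noncomm_ring
        _ = b * p * a := by rw [habg]
    set P := b * (g * g) * a with hPdef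
    have hfh : (b * a) * P = f := by
      calc (b * a) * P = b * (((a * b) * g) * g) * a := by rw [hPdef]; noncomm_ring
        _ = b * (p * g) * a := by rw [habg]
        _ = b * g * a := by rw [hpg]
        _ = f := by rw [hfdef]
    have hhf : P * (b * a) = f := by
      calc P * (b * a) = b * (g * (g * (a * b))) * a := by rw [hPdef]; noncomm_ring
        _ = b * (g * p) * a := by rw [hgab]
        _ = b * g * a := by rw [hgp]
        _ = f := by rw [hfdef]
    -- g is in the double commutant of α
    have hgcomm : ∀ z : R, z * α = α * z → g * z = z * g := by
      intro z hz
      have czα : Commute z α := hz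
      have czx : Commute z x := Commute.symm (hx2 z hz)
      have cze : Commute z e := by rw [hedef]; exact czα.mul_right czx
      have czp : Commute z p := by rw [hpdef]; exact (Commute.one_right z).sub_right cze
      have czq : Commute z q := by
        rw [hqdef]; exact (czα.pow_right (m + 1)).sub_right cze
      have czS : Commute z S := by
        rw [hSdef]; exact Commute.sum_right _ _ _ fun i _ => czα.pow_right i
      have czU : Commute z (U : R) := by
        rw [hU]; exact (Commute.one_right z).sub_right (czq.mul_right czp)
      have czv : Commute z v := by rw [hvdef]; exact czU.units_inv_right
      have czg : Commute z g := by rw [hgdef]; exact (czS.mul_right czp).mul_right czv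
      exact czg.symm.eq
    -- f commutes with everything commuting with β
    have hfcomm : ∀ t : R, t * β = β * t → f * t = t * f := by
      intro t ht
      have htba : t * (b * a) = (b * a) * t := by
        calc t * (b * a) = t - t * β := by rw [hβdef]; noncomm_ring
          _ = t - β * t := by rw [ht]
          _ = (b * a) * t := by rw [hβdef]; noncomm_ring
      have hs : (a * t * b) * α = α * (a * t * b) := by
        rw [hαdef]
        calc (a * t * b) * (1 - a * b) = a * t * b - a * (t * (b * a)) * b := by noncomm_ring
          _ = a * t * b - a * ((b * a) * t) * b := by rw [htba]
          _ = (1 - a * b) * (a * t * b) := by noncomm_ring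
      have hgs : g * (a * t * b) = (a * t * b) * g := hgcomm _ hs
      have key1 : f * t * (b * a) = (b * a) * (t * f) := by
        calc f * t * (b * a) = b * (g * (a * t * b)) * a := by rw [hfdef]; noncomm_ring
          _ = b * ((a * t * b) * g) * a := by rw [hgs]
          _ = (b * a) * (t * (b * g * a)) := by noncomm_ring
          _ = (b * a) * (t * f) := by rw [hfdef]
      have key2 : (b * a) * (f * t) = (b * a) * (t * f) := by
        calc (b * a) * (f * t) = ((b * a) * f) * t := by rw [← mul_assoc]
          _ = (f * (b * a)) * t := by rw [hbaf, ← hfba]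
          _ = f * ((b * a) * t) := by rw [mul_assoc]
          _ = f * (t * (b * a)) := by rw [← htba]
          _ = (f * t) * (b * a) := by rw [← mul_assoc]
          _ = (b * a) * (t * f) := key1
      have key3 : (f * t) * (b * a) = (t * f) * (b * a) := by
        calc (f * t) * (b * a) = (b * a) * (t * f) := key1
          _ = ((b * a) * t) * f := by rw [← mul_assoc]
          _ = (t * (b * a)) * f := by rw [← htba]
          _ = t * ((b * a) * f) := by rw [mul_assoc]
          _ = t * (f * (b * a)) := by rw [hbaf, ← hfba]
          _ = (t * f) * (b * a) := by rw [← mul_assoc]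
      have z1 : f * (f * t) = f * (t * f) := by
        calc f * (f * t) = (P * (b * a)) * (f * t) := by rw [hhf]
          _ = P * ((b * a) * (f * t)) := by rw [mul_assoc]
          _ = P * ((b * a) * (t * f)) := by rw [key2]
          _ = (P * (b * a)) * (t * f) := by rw [← mul_assoc]
          _ = f * (t * f) := by rw [hhf]
      have z2 : (f * t) * f = (t * f) * f := by
        calc (f * t) * f = (f * t) * ((b * a) * P) := by rw [hfh]
          _ = ((f * t) * (b * a)) * P := by rw [← mul_assoc]
          _ = ((t * f) * (b * a)) * P := by rw [key3]
          _ = (t * f) * ((b * a) * P) := by rw [mul_assoc]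
          _ = (t * f) * f := by rw [hfh]
      calc f * t = (f * f) * t := by rw [hf2]
        _ = f * (f * t) := by rw [mul_assoc]
        _ = f * (t * f) := z1
        _ = (f * t) * f := by rw [← mul_assoc]
        _ = (t * f) * f := z2
        _ = t * (f * f) := by rw [mul_assoc]
        _ = t * f := by rw [hf2]
    set E := 1 - f with hEdef
    have hE2 : E * E = E := by
      rw [hEdef]
      calc (1 - f) * (1 - f) = 1 - f - f + f * f := by noncomm_ring
        _ = 1 - f := by rw [hf2]; noncomm_ring
    have hfβ : f * β = β * f := by
      calc f * β = f - f * (b * a) := by rw [hβdef]; noncomm_ring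
        _ = f - b * p * a := by rw [hfba]
        _ = f - (b * a) * f := by rw [← hbaf]
        _ = β * f := by rw [hβdef]; noncomm_ring
    have cβf : Commute β f := hfβ.symm
    have cβE : Commute β E := by rw [hEdef]; exact (Commute.one_right β).sub_right cβf
    -- the power identity: b*S*a = 1 - β^(m+1)
    have hbα : b * α = β * b := by rw [hαdef, hβdef]; noncomm_ring
    have hbpow : ∀ k : ℕ, b * α ^ k = β ^ k * b := by
      intro k
      induction k with
      | zero => simp
      | succ k ih =>
        calc b * α ^ (k + 1) = (b * α ^ k) * α := by rw [pow_succ, ← mul_assoc]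
          _ = (β ^ k * b) * α := by rw [ih]
          _ = β ^ k * (b * α) := by rw [mul_assoc]
          _ = β ^ k * (β * b) := by rw [hbα]
          _ = β ^ (k + 1) * b := by rw [pow_succ, mul_assoc]
    set Sb := ∑ i ∈ Finset.range (m + 1), β ^ i with hSbdef
    have hbS : b * S = Sb * b := by
      rw [hSdef, hSbdef, Finset.mul_sum, Finset.sum_mul]
      exact Finset.sum_congr rfl fun i _ => hbpow i
    have hGb := geom_sum_mul β (m + 1)
    rw [← hSbdef] at hGb
    have hSb1 : Sb * (1 - β) = 1 - β ^ (m + 1) := by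
      calc Sb * (1 - β) = -(Sb * (β - 1)) := by noncomm_ring
        _ = -(β ^ (m + 1) - 1) := by rw [hGb]
        _ = 1 - β ^ (m + 1) := by noncomm_ring
    have hba1β : b * a = 1 - β := by rw [hβdef]; noncomm_ring
    have hbSa : b * S * a = 1 - β ^ (m + 1) := by
      calc b * S * a = (Sb * b) * a := by rw [hbS]
        _ = Sb * (b * a) := by rw [mul_assoc]
        _ = Sb * (1 - β) := by rw [hba1β]
        _ = 1 - β ^ (m + 1) := hSb1
    -- quasinilpotency of β^(m+1) - E
    have heq : β ^ (m + 1) - E = b * (g - S) * a := by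
      rw [hEdef]
      calc β ^ (m + 1) - (1 - f) = f - (1 - β ^ (m + 1)) := by noncomm_ring
        _ = f - b * S * a := by rw [hbSa]
        _ = b * g * a - b * S * a := by rw [hfdef]
        _ = b * (g - S) * a := by noncomm_ring
    have habw : a * (b * (g - S)) = q := by
      calc a * (b * (g - S)) = (a * b) * g - (a * b) * S := by noncomm_ring
        _ = p - (a * b) * S := by rw [habg]
        _ = p - (1 - α ^ (m + 1)) := by rw [habS]
        _ = q := by rw [hpdef, hqdef]; noncomm_ring
    have hq1 : Quasinilpotent (a * (b * (g - S))) := by rw [habw]; exact hx3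
    have hq2 : Quasinilpotent ((b * (g - S)) * a) := quasiSwapAux _ _ hq1
    have hqnE : Quasinilpotent (β ^ (m + 1) - E) := by rw [heq]; exact hq2
    -- the unit W = 1 + (β^(m+1) - E) * E and its inverse w
    have cq'E : Commute (β ^ (m + 1) - E) E :=
      ((cβE.pow_left (m + 1)).sub_left (Commute.refl E))
    have hWu : IsUnit (1 + (β ^ (m + 1) - E) * E) := hqnE E cq'E.eq
    obtain ⟨W, hW⟩ := hWu
    set w := (↑W⁻¹ : R) with hwdef
    have hWw : (W : R) * w = 1 := by rw [hwdef]; exact W.mul_inv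
    have hwW : w * (W : R) = 1 := by rw [hwdef]; exact W.inv_mul
    have cβW : Commute β (W : R) := by
      rw [hW]
      exact (Commute.one_right β).add_right
        ((((Commute.refl β).pow_right (m + 1)).sub_right cβE).mul_right cβE)
    have cβw : Commute β w := by rw [hwdef]; exact cβW.units_inv_right
    have cEW : Commute E (W : R) := by
      rw [hW]
      exact (Commute.one_right E).add_right ((cq'E.symm).mul_right (Commute.refl E))
    have cEw : Commute E w := by rw [hwdef]; exact cEW.units_inv_right
    have hWE : (W : R) * E = β ^ (m + 1) * E := by
      rw [hW]
      calc (1 + (β ^ (m + 1) - E) * E) * E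
          = E + (β ^ (m + 1) - E) * (E * E) := by noncomm_ring
        _ = E + (β ^ (m + 1) - E) * E := by rw [hE2]
        _ = β ^ (m + 1) * E + (E - E * E) := by noncomm_ring
        _ = β ^ (m + 1) * E := by rw [hE2]; noncomm_ring
    -- the candidate inverse y = β^m * w * E
    have hpow : β * β ^ m = β ^ (m + 1) := (pow_succ' β m).symm
    have cβmw : Commute (β ^ (m + 1)) w := cβw.pow_left (m + 1)
    have hβy : β * (β ^ m * w * E) = E := by
      calc β * (β ^ m * w * E) = (β * β ^ m) * (w * E) := by noncomm_ring
        _ = β ^ (m + 1) * (w * E) := by rw [hpow]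
        _ = (β ^ (m + 1) * w) * E := by rw [← mul_assoc]
        _ = (w * β ^ (m + 1)) * E := by rw [cβmw.eq]
        _ = w * (β ^ (m + 1) * E) := by rw [mul_assoc]
        _ = w * ((W : R) * E) := by rw [← hWE]
        _ = (w * (W : R)) * E := by rw [← mul_assoc]
        _ = 1 * E := by rw [hwW]
        _ = E := one_mul E
    have cEβm : Commute E (β ^ m) := (cβE.symm).pow_right m
    have hEy : E * (β ^ m * w * E) = β ^ m * w * E := by
      calc E * (β ^ m * w * E) = (E * β ^ m) * (w * E) := by noncomm_ring
        _ = (β ^ m * E) * (w * E) := by rw [cEβm.eq]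
        _ = β ^ m * ((E * w) * E) := by noncomm_ring
        _ = β ^ m * ((w * E) * E) := by rw [cEw.eq]
        _ = (β ^ m * w) * (E * E) := by noncomm_ring
        _ = (β ^ m * w) * E := by rw [hE2]
    have cβy : Commute β (β ^ m * w * E) :=
      (((Commute.refl β).pow_right m).mul_right cβw).mul_right cβE
    refine ⟨β ^ m * w * E, ?_, ?_, ?_⟩
    · calc (β ^ m * w * E) * β * (β ^ m * w * E)
          = (β * (β ^ m * w * E)) * (β ^ m * w * E) := by rw [← cβy.eq]
        _ = E * (β ^ m * w * E) := by rw [hβy]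
        _ = β ^ m * w * E := hEy
    · intro t ht
      have ctβ : Commute t β := ht
      have ctf : Commute t f := Commute.symm (hfcomm t ht)
      have ctE : Commute t E := by rw [hEdef]; exact (Commute.one_right t).sub_right ctf
      have ctq' : Commute t (β ^ (m + 1) - E) := (ctβ.pow_right (m + 1)).sub_right ctE
      have ctW : Commute t (W : R) := by
        rw [hW]; exact (Commute.one_right t).add_right (ctq'.mul_right ctE)
      have ctw : Commute t w := by rw [hwdef]; exact ctW.units_inv_right
      have cty : Commute t (β ^ m * w * E) := ((ctβ.pow_right m).mul_right ctw).mul_right ctE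
      exact cty.symm.eq
    · rw [hβy]
      exact hqnE
end

section
/- Let R be a ring and a, b ∈ R, and m ∈ ℕ. Then (1 − ab)^m has a generalized n-strongly Drazin inverse if and only if (1 − ba)^m has a generalized n-strongly Drazin inverse. -/
section Aux

variable {R : Type*} [Ring R]

/-- Jacobson's lemma for units, `1 + PQ` unit implies `1 + QP` unit. -/
lemma unit_swap {P Q : R} (h : IsUnit (1 + P*Q)) : IsUnit (1 + Q*P) := by
  obtain ⟨u, hu⟩ := h
  have e1 : (1 + P*Q) * (↑u⁻¹ : R) = 1 := by rw [← hu]; exact u.mul_inv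
  have e2 : (↑u⁻¹ : R) * (1 + P*Q) = 1 := by rw [← hu]; exact u.inv_mul
  have h1 : (1 + Q*P) * (1 - Q*(↑u⁻¹ : R)*P) = 1 := by
    have h0 : (1 + Q*P) * (1 - Q*(↑u⁻¹ : R)*P)
        = 1 + Q*P - Q*((1 + P*Q) * (↑u⁻¹ : R))*P := by noncomm_ring
    rw [h0, e1]; noncomm_ring
  have h2 : (1 - Q*(↑u⁻¹ : R)*P) * (1 + Q*P) = 1 := by
    have h0 : (1 - Q*(↑u⁻¹ : R)*P) * (1 + Q*P)
        = 1 + Q*P - Q*((↑u⁻¹ : R) * (1 + P*Q))*P := by noncomm_ring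
    rw [h0, e2]; noncomm_ring
  exact ⟨⟨_, _, h1, h2⟩, rfl⟩

lemma isUnit_of_isUnit_mul_comm {X Y : R} (h : IsUnit (X*Y)) (hc : X*Y = Y*X) :
    IsUnit X := by
  obtain ⟨u, hu⟩ := h
  have h1 : X * (Y * (↑u⁻¹ : R)) = 1 := by rw [← mul_assoc, ← hu]; exact u.mul_inv
  have hyu : Commute Y (u : R) := by
    show Y * (u : R) = (u : R) * Y
    rw [hu, ← mul_assoc, ← hc]
  have hyuinv : Y * (↑u⁻¹ : R) = (↑u⁻¹ : R) * Y := (hyu.units_inv_right).eq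
  have h2 : (Y * (↑u⁻¹ : R)) * X = 1 := by
    rw [hyuinv, mul_assoc, ← hc, ← hu]
    exact u.inv_mul
  exact ⟨⟨X, Y * (↑u⁻¹ : R), h1, h2⟩, rfl⟩

/-- Cline-type swap for quasinilpotents. -/
lemma qnil_swap {X Y : R} (h : Quasinilpotent (X*Y)) : Quasinilpotent (Y*X) := by
  have step : ∀ u : R, (Y*X)*u = u*(Y*X) → IsUnit (1 + u*((Y*X)*(Y*X))) := by
    intro u hu
    have hz : (X*Y)*(X*u*Y) = (X*u*Y)*(X*Y) := by
      calc (X*Y)*(X*u*Y) = X*((Y*X)*u)*Y := by noncomm_ring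
        _ = X*(u*(Y*X))*Y := by rw [hu]
        _ = (X*u*Y)*(X*Y) := by noncomm_ring
    have h0 := h _ hz
    have h1 : IsUnit (1 + X*((Y*X*u)*Y)) := by
      have hre : 1 + (X*Y)*(X*u*Y) = 1 + X*((Y*X*u)*Y) := by noncomm_ring
      rwa [hre] at h0
    have h2 := unit_swap h1
    have hre2 : 1 + ((Y*X*u)*Y)*X = 1 + u*((Y*X)*(Y*X)) := by
      calc 1 + ((Y*X*u)*Y)*X = 1 + ((Y*X)*u)*(Y*X) := by noncomm_ring
        _ = 1 + (u*(Y*X))*(Y*X) := by rw [hu]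
        _ = 1 + u*((Y*X)*(Y*X)) := by noncomm_ring
    rwa [hre2] at h2
  intro t ht
  have hc : (Y*X)*(-(t*t)) = (-(t*t))*(Y*X) := by
    calc (Y*X)*(-(t*t)) = -(((Y*X)*t)*t) := by noncomm_ring
      _ = -((t*(Y*X))*t) := by rw [ht]
      _ = -(t*((Y*X)*t)) := by noncomm_ring
      _ = -(t*(t*(Y*X))) := by rw [ht]
      _ = (-(t*t))*(Y*X) := by noncomm_ring
  have hmain := step _ hc
  have key : ((Y*X)*t)*((Y*X)*t) = (t*t)*((Y*X)*(Y*X)) := by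
    rw [ht]
    calc (t*(Y*X))*(t*(Y*X)) = t*((Y*X)*t)*(Y*X) := by noncomm_ring
      _ = t*(t*(Y*X))*(Y*X) := by rw [ht]
      _ = (t*t)*((Y*X)*(Y*X)) := by noncomm_ring
  have hfac1 : (1 + (Y*X)*t)*(1 - (Y*X)*t) = 1 + (-(t*t))*((Y*X)*(Y*X)) := by
    rw [show (1 + (Y*X)*t)*(1 - (Y*X)*t) = 1 - ((Y*X)*t)*((Y*X)*t) from by noncomm_ring,
      key]
    noncomm_ring
  have hfac2 : (1 - (Y*X)*t)*(1 + (Y*X)*t) = 1 + (-(t*t))*((Y*X)*(Y*X)) := by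
    rw [show (1 - (Y*X)*t)*(1 + (Y*X)*t) = 1 - ((Y*X)*t)*((Y*X)*t) from by noncomm_ring,
      key]
    noncomm_ring
  have hunit : IsUnit ((1 + (Y*X)*t)*(1 - (Y*X)*t)) := by rw [hfac1]; exact hmain
  exact isUnit_of_isUnit_mul_comm hunit (hfac1.trans hfac2.symm)

lemma pow_one_sub (a b : R) (m : ℕ) :
    (1 - a*b)^m = 1 - a*(∑ i ∈ Finset.range m, (1-b*a)^i)*b := by
  induction m with
  | zero => simp
  | succ m ih =>
    have hc : (b*a) * (∑ i ∈ Finset.range m, (1-b*a)^i)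
        = (∑ i ∈ Finset.range m, (1-b*a)^i) * (b*a) :=
      (Commute.sum_right _ _ _ (fun i _ =>
        (((Commute.one_right (b*a)).sub_right (Commute.refl (b*a))).pow_right i))).eq
    rw [pow_succ, ih, geom_sum_succ]
    have e1 : (1 - a*(∑ i ∈ Finset.range m, (1-b*a)^i)*b)*(1-a*b)
        = 1 - a*((∑ i ∈ Finset.range m, (1-b*a)^i) + 1)*b
          + a*((∑ i ∈ Finset.range m, (1-b*a)^i)*(b*a))*b := by noncomm_ring
    have e2 : 1 - a*((1-b*a) * (∑ i ∈ Finset.range m, (1-b*a)^i) + 1)*b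
        = 1 - a*((∑ i ∈ Finset.range m, (1-b*a)^i) + 1)*b
          + a*((b*a)*(∑ i ∈ Finset.range m, (1-b*a)^i))*b := by noncomm_ring
    rw [e1, e2, hc]

/-- Jacobson's lemma for generalized n-strongly Drazin inverses. -/
lemma gns_jacobson (n : ℕ) (A B : R) (h : HasGnsDrazin n (1 - A*B)) :
    HasGnsDrazin n (1 - B*A) := by
  obtain ⟨d, hd1, hd2, hd3⟩ := h
  set α : R := 1 - A*B with hα
  set β : R := 1 - B*A with hβ
  have hdα0 : d*α = α*d := hd2 α rfl
  set e : R := α*d with he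
  -- after `set`, hdα0 : d*α = e
  have hdα : d*α = α*d := by rw [hdα0]
  have hde : d*e = d := by rw [he, ← mul_assoc]; exact hd1
  have hed : e*d = d := by
    rw [he]
    calc α*d*d = d*α*d := by rw [hdα]
      _ = d := hd1
  have hee : e*e = e := by
    rw [he]
    calc α*d*(α*d) = α*(d*α*d) := by noncomm_ring
      _ = α*d := by rw [hd1]
  have Msub : ∀ s : R, s*α = α*s → s*e = e*s := by
    intro s hs
    rw [he]
    calc s*(α*d) = (s*α)*d := by rw [mul_assoc]
      _ = (α*s)*d := by rw [hs]
      _ = α*(s*d) := by rw [mul_assoc]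
      _ = α*(d*s) := by rw [hd2 s hs]
      _ = (α*d)*s := by rw [mul_assoc]
  set q : R := α^n - e with hq
  -- hd3 : Quasinilpotent q
  have Mq : ∀ s : R, s*α = α*s → s*q = q*s := by
    intro s hs
    have hs' : Commute s α := hs
    have hsn : s*α^n = α^n*s := (hs'.pow_right n).eq
    rw [hq, mul_sub, sub_mul, hsn, Msub s hs]
  have hunit : IsUnit (1 - q) := by
    have h0 := hd3 (-1) (by noncomm_ring)
    rwa [show (1:R) + q*(-1) = 1 - q from by noncomm_ring] at h0
  obtain ⟨u, hu⟩ := hunit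
  have hr1 : (1-q)*(↑u⁻¹ : R) = 1 := by rw [← hu]; exact u.mul_inv
  have hr2 : (↑u⁻¹ : R)*(1-q) = 1 := by rw [← hu]; exact u.inv_mul
  set r : R := (↑u⁻¹ : R) with hrdef
  have Mr : ∀ s : R, s*α = α*s → s*r = r*s := by
    intro s hs
    have h1 : s*(1-q) = (1-q)*s := by
      rw [mul_sub, sub_mul, mul_one, one_mul, Mq s hs]
    have hsu : Commute s (u : R) := by
      show s * (u : R) = (u : R) * s
      rw [hu]; exact h1
    rw [hrdef]
    exact (hsu.units_inv_right).eq
  set σ : R := ∑ i ∈ Finset.range n, α^i with hσdef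
  have Mσ : ∀ s : R, s*α = α*s → s*σ = σ*s := by
    intro s hs
    have hs' : Commute s α := hs
    rw [hσdef]
    exact (Commute.sum_right _ _ _ (fun i _ => hs'.pow_right i)).eq
  have hσα : σ*α = α*σ := (Mσ α rfl).symm
  have hgeom : σ*(α-1) = α^n - 1 := by rw [hσdef]; exact geom_sum_mul α n
  have hσ1α : (1-α)*σ = 1 - α^n := by
    calc (1-α)*σ = σ - α*σ := by noncomm_ring
      _ = σ - σ*α := by rw [hσα]
      _ = -(σ*(α-1)) := by noncomm_ring
      _ = -(α^n-1) := by rw [hgeom]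
      _ = 1 - α^n := by noncomm_ring
  have hσ1α' : σ*(1-α) = 1 - α^n := by
    calc σ*(1-α) = σ - σ*α := by noncomm_ring
      _ = σ - α*σ := by rw [hσα]
      _ = (1-α)*σ := by noncomm_ring
      _ = 1 - α^n := hσ1α
  set π : R := σ*(r*(1-e)) with hπdef
  have Mπ : ∀ s : R, s*α = α*s → s*π = π*s := by
    intro s hs
    have h1 : s*(1-e) = (1-e)*s := by
      rw [mul_sub, sub_mul, mul_one, one_mul, Msub s hs]
    have h2 := Mr s hs
    have h3 := Mσ s hs
    rw [hπdef]
    calc s*(σ*(r*(1-e))) = (s*σ)*(r*(1-e)) := by noncomm_ring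
      _ = (σ*s)*(r*(1-e)) := by rw [h3]
      _ = σ*((s*r)*(1-e)) := by noncomm_ring
      _ = σ*((r*s)*(1-e)) := by rw [h2]
      _ = (σ*r)*(s*(1-e)) := by noncomm_ring
      _ = (σ*r)*((1-e)*s) := by rw [h1]
      _ = (σ*(r*(1-e)))*s := by noncomm_ring
  have hπα : π*α = α*π := (Mπ α rfl).symm
  have heα : e*α = α*e := (Msub α rfl).symm
  have hrα : r*α = α*r := (Mr α rfl).symm
  have hre : r*e = e*r := Msub r hrα
  have h1e : (1-e)*e = 0 := by rw [sub_mul, one_mul, hee, sub_self]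
  have h1er : (1-e)*r = r*(1-e) := by
    rw [sub_mul, mul_sub, one_mul, mul_one, hre]
  have hπ1α : (1-α)*π = 1 - e := by
    have hc : (1-(q+e))*(1-e) = (1-q)*(1-e) := by
      have h0 : (1-(q+e))*(1-e) = (1-q)*(1-e) - (e - e*e) := by noncomm_ring
      rw [h0, hee]; noncomm_ring
    have hαn : α^n = q + e := by rw [hq]; noncomm_ring
    calc (1-α)*π = ((1-α)*σ)*(r*(1-e)) := by rw [hπdef]; noncomm_ring
      _ = (1-α^n)*(r*(1-e)) := by rw [hσ1α]
      _ = (1-(q+e))*(r*(1-e)) := by rw [hαn]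
      _ = (1-(q+e))*((1-e)*r) := by rw [h1er]
      _ = ((1-(q+e))*(1-e))*r := by noncomm_ring
      _ = ((1-q)*(1-e))*r := by rw [hc]
      _ = (1-q)*((1-e)*r) := by noncomm_ring
      _ = (1-q)*(r*(1-e)) := by rw [h1er]
      _ = ((1-q)*r)*(1-e) := by noncomm_ring
      _ = 1-e := by rw [hr1, one_mul]
  have hπ1α' : π*(1-α) = 1 - e := by
    calc π*(1-α) = π - π*α := by noncomm_ring
      _ = π - α*π := by rw [hπα]
      _ = (1-α)*π := by noncomm_ring
      _ = 1-e := hπ1α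
  have hπe : π*e = 0 := by
    rw [hπdef]
    calc (σ*(r*(1-e)))*e = (σ*r)*((1-e)*e) := by noncomm_ring
      _ = (σ*r)*0 := by rw [h1e]
      _ = 0 := mul_zero _
  have heπ : e*π = 0 := by rw [Mπ e heα]; exact hπe
  have hαπ : α*π = π - (1-e) := by
    calc α*π = π - (1-α)*π := by noncomm_ring
      _ = π - (1-e) := by rw [hπ1α]
  set z : R := d - π with hzdef
  have hαz : α*z = 1 - π := by
    calc α*z = α*d - α*π := by rw [hzdef]; noncomm_ring
      _ = e - (π - (1-e)) := by rw [← he, hαπ]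
      _ = 1 - π := by noncomm_ring
  have hzα : z*α = 1 - π := by
    calc z*α = d*α - π*α := by rw [hzdef]; noncomm_ring
      _ = e - (π - (1-e)) := by rw [hdα0, hπα, hαπ]
      _ = 1 - π := by noncomm_ring
  set y : R := 1 + B*z*A with hydef
  have hβy : β*y = 1 - B*π*A := by
    calc β*y = 1 - B*A + B*(α*z)*A := by rw [hydef, hβ, hα]; noncomm_ring
      _ = 1 - B*A + B*(1-π)*A := by rw [hαz]
      _ = 1 - B*π*A := by noncomm_ring
  have hyβ : y*β = 1 - B*π*A := by
    calc y*β = 1 - B*A + B*(z*α)*A := by rw [hydef, hβ, hα]; noncomm_ring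
      _ = 1 - B*A + B*(1-π)*A := by rw [hzα]
      _ = 1 - B*π*A := by noncomm_ring
  have hez : e*z = d := by rw [hzdef, mul_sub, hed, heπ, sub_zero]
  have h1ez : (1-e)*z = -π := by
    rw [sub_mul, one_mul, hez, hzdef]
    noncomm_ring
  have hAB : A*B = 1 - α := by rw [hα]; noncomm_ring
  have hπAB : π*(A*B) = 1 - e := by rw [hAB]; exact hπ1α'
  have hPy : (B*π*A)*y = 0 := by
    calc (B*π*A)*y = B*π*A + B*((π*(A*B))*z)*A := by rw [hydef]; noncomm_ring
      _ = B*π*A + B*((1-e)*z)*A := by rw [hπAB]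
      _ = B*π*A + B*(-π)*A := by rw [h1ez]
      _ = 0 := by noncomm_ring
  have hcond1 : y*β*y = y := by
    calc y*β*y = (1 - B*π*A)*y := by rw [hyβ]
      _ = y - (B*π*A)*y := by noncomm_ring
      _ = y := by rw [hPy, sub_zero]
  -- condition 3 : quasinilpotency
  have hpow : β^n = 1 - B*σ*A := by
    rw [hβ, hσdef, hα]
    exact pow_one_sub B A n
  have hqnil_target : β^n - β*y = B*((π-σ)*A) := by
    rw [hpow, hβy]; noncomm_ring
  have hπσq : ((π-σ)*A)*B = q := by
    calc ((π-σ)*A)*B = (π-σ)*(A*B) := by rw [mul_assoc]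
      _ = (π-σ)*(1-α) := by rw [hAB]
      _ = π*(1-α) - σ*(1-α) := by noncomm_ring
      _ = (1-e) - (1-α^n) := by rw [hπ1α', hσ1α']
      _ = q := by rw [hq]; noncomm_ring
  have hcond3 : Quasinilpotent (β^n - β*y) := by
    rw [hqnil_target]
    have hq1 : Quasinilpotent (((π-σ)*A)*B) := by rw [hπσq]; exact hd3
    exact qnil_swap hq1
  -- condition 2 : double commutant
  set w : R := d - π - π*π with hwdef
  have hd1α : d*(1-α) = d - e := by rw [mul_sub, mul_one, hdα0]
  have hππ1α : (π*π)*(1-α) = π := by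
    calc (π*π)*(1-α) = π*(π*(1-α)) := by noncomm_ring
      _ = π*(1-e) := by rw [hπ1α']
      _ = π - π*e := by noncomm_ring
      _ = π := by rw [hπe, sub_zero]
  have hw1α : w*(1-α) = z - 1 := by
    rw [hwdef]
    calc (d - π - π*π)*(1-α) = d*(1-α) - π*(1-α) - (π*π)*(1-α) := by noncomm_ring
      _ = (d - e) - (1-e) - π := by rw [hd1α, hπ1α', hππ1α]
      _ = z - 1 := by rw [hzdef]; noncomm_ring
  have hyform : y = 1 + B*A + (B*w*A)*(B*A) := by
    have h1 : (B*w*A)*(B*A) = B*(w*(1-α))*A := by rw [hα]; noncomm_ring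
    rw [hydef, h1, hw1α]
    noncomm_ring
  have hcond2 : InDoubleCommutant y β := by
    intro t ht
    have htBA : t*(B*A) = (B*A)*t := by
      calc t*(B*A) = t - t*β := by rw [hβ]; noncomm_ring
        _ = t - β*t := by rw [ht]
        _ = (B*A)*t := by rw [hβ]; noncomm_ring
    have hw2 : ∀ s : R, s*(A*B) = (A*B)*s → w*s = s*w := by
      intro s hs
      have hsα : s*α = α*s := by
        calc s*α = s - s*(A*B) := by rw [hα]; noncomm_ring
          _ = s - (A*B)*s := by rw [hs]
          _ = α*s := by rw [hα]; noncomm_ring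
      have h1 := hd2 s hsα
      have h2 := Mπ s hsα
      rw [hwdef]
      calc (d - π - π*π)*s = d*s - π*s - π*(π*s) := by noncomm_ring
        _ = s*d - s*π - π*(s*π) := by rw [h1, ← h2]
        _ = s*d - s*π - (π*s)*π := by noncomm_ring
        _ = s*d - s*π - (s*π)*π := by rw [← h2]
        _ = s*(d - π - π*π) := by noncomm_ring
    have hABw : w*(A*B) = (A*B)*w := hw2 (A*B) rfl
    have hs0 : (A*t*B)*(A*B) = (A*B)*(A*t*B) := by
      calc (A*t*B)*(A*B) = A*(t*(B*A))*B := by noncomm_ring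
        _ = A*((B*A)*t)*B := by rw [htBA]
        _ = (A*B)*(A*t*B) := by noncomm_ring
    have hws := hw2 (A*t*B) hs0
    have hTt : ((B*w*A)*(B*A))*t = t*((B*w*A)*(B*A)) := by
      calc ((B*w*A)*(B*A))*t = (B*w*A)*((B*A)*t) := by noncomm_ring
        _ = (B*w*A)*(t*(B*A)) := by rw [htBA]
        _ = B*(w*(A*t*B))*A := by noncomm_ring
        _ = B*((A*t*B)*w)*A := by rw [hws]
        _ = ((B*A)*t)*(B*w*A) := by noncomm_ring
        _ = (t*(B*A))*(B*w*A) := by rw [← htBA]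
        _ = t*(B*((A*B)*w)*A) := by noncomm_ring
        _ = t*(B*(w*(A*B))*A) := by rw [← hABw]
        _ = t*((B*w*A)*(B*A)) := by noncomm_ring
    calc y*t = (1 + B*A + (B*w*A)*(B*A))*t := by rw [hyform]
      _ = t + (B*A)*t + ((B*w*A)*(B*A))*t := by noncomm_ring
      _ = t + t*(B*A) + t*((B*w*A)*(B*A)) := by rw [hTt, ← htBA]
      _ = t*(1 + B*A + (B*w*A)*(B*A)) := by noncomm_ring
      _ = t*y := by rw [← hyform]
  exact ⟨y, hcond1, hcond2, hcond3⟩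

lemma gns_pow_dir (n m : ℕ) (a b : R) (h : HasGnsDrazin n ((1 - a*b)^m)) :
    HasGnsDrazin n ((1 - b*a)^m) := by
  set S : R := ∑ i ∈ Finset.range m, (1-b*a)^i with hS
  have h1 : (1:R) - a*(S*b) = (1-a*b)^m := by
    rw [pow_one_sub a b m, hS]; noncomm_ring
  rw [← h1] at h
  have h2 := gns_jacobson n a (S*b) h
  have h3 : (1:R) - (S*b)*a = (1-b*a)^m := by
    have g := geom_sum_mul (1-b*a) m
    calc (1:R) - (S*b)*a = 1 + S*((1-b*a)-1) := by rw [hS]; noncomm_ring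
      _ = 1 + ((1-b*a)^m - 1) := by rw [hS]; rw [g]
      _ = (1-b*a)^m := by noncomm_ring
  rwa [h3] at h2

end Aux

theorem stmt3 {R : Type*} [Ring R] (n m : ℕ) (a b : R) :
    HasGnsDrazin n ((1 - a * b) ^ m) ↔ HasGnsDrazin n ((1 - b * a) ^ m) :=
  ⟨gns_pow_dir n m a b, gns_pow_dir n m b a⟩
end

section
/- Let R be a ring and let A ∈ M_{k×l}(R), B ∈ M_{l×k}(R) be rectangular matrices over R. Then the k×k matrix I_k + AB has a generalized n-strongly Drazin inverse in M_k(R) if and only if the l×l matrix I_l + BA has a generalized n-strongly Drazin inverse in M_l(R). -/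
set_option maxHeartbeats 1000000

lemma isUnit_of_comm_mul {S : Type*} [Ring S] {a b : S} (h : a * b = b * a)
    (hu : IsUnit (a * b)) : IsUnit a := by
  obtain ⟨u, hu⟩ := hu
  set c : S := (Units.val u⁻¹) with hc
  have h1 : a * (b * c) = 1 := by
    rw [← mul_assoc, ← hu, hc]; exact u.mul_inv
  have h2 : (c * b) * a = 1 := by
    rw [mul_assoc, ← h, ← hu, hc]; exact u.inv_mul
  have h3 : b * c = c * b := by
    calc b * c = ((c * b) * a) * (b * c) := by rw [h2, one_mul]
    _ = (c * b) * (a * (b * c)) := by rw [mul_assoc]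
    _ = c * b := by rw [h1, mul_one]
  exact ⟨⟨a, b * c, h1, by rw [h3]; exact h2⟩, rfl⟩

lemma jacobson_isUnit {R : Type*} [Ring R] {m n : Type*} [Fintype m] [Fintype n]
    [DecidableEq m] [DecidableEq n]
    (U : Matrix m n R) (V : Matrix n m R)
    (h : IsUnit (1 + V * U)) : IsUnit (1 + U * V) := by
  obtain ⟨u, hu⟩ := h
  have h1 : (1 + V * U) * (Units.val u⁻¹) = 1 := by
    rw [← hu]; exact u.mul_inv
  have h2 : (Units.val u⁻¹) * (1 + V * U) = 1 := by
    rw [← hu]; exact u.inv_mul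
  clear hu
  set s : Matrix n n R := (Units.val u⁻¹) with hs
  have key1 : s + V * U * s = 1 := by
    calc s + V * U * s = (1 + V * U) * s := by rw [Matrix.add_mul, Matrix.one_mul]
    _ = 1 := h1
  have key2 : s + s * (V * U) = 1 := by
    calc s + s * (V * U) = s * (1 + V * U) := by rw [Matrix.mul_add, Matrix.mul_one]
    _ = 1 := h2
  refine ⟨⟨1 + U * V, 1 - U * s * V, ?_, ?_⟩, rfl⟩
  · have expand : (1 + U * V) * (1 - U * s * V)
        = 1 + U * V - (U * (s * V) + U * (V * (U * (s * V)))) := by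
      simp only [Matrix.mul_sub, Matrix.sub_mul, Matrix.mul_add, Matrix.add_mul,
        Matrix.one_mul, Matrix.mul_one, Matrix.mul_assoc]
      all_goals abel
    rw [expand]
    have hkey : U * (s * V) + U * (V * (U * (s * V))) = U * V := by
      calc U * (s * V) + U * (V * (U * (s * V)))
          = U * (s * V) + U * ((V * U * s) * V) := by simp only [Matrix.mul_assoc]
      _ = U * ((s + V * U * s) * V) := by
            rw [Matrix.add_mul, Matrix.mul_add]
      _ = U * ((1 : Matrix n n R) * V) := by rw [key1]
      _ = U * V := by rw [Matrix.one_mul]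
    rw [hkey]; abel
  · have expand : (1 - U * s * V) * (1 + U * V)
        = 1 + U * V - (U * (s * V) + U * (s * (V * (U * V)))) := by
      simp only [Matrix.mul_sub, Matrix.sub_mul, Matrix.mul_add, Matrix.add_mul,
        Matrix.one_mul, Matrix.mul_one, Matrix.mul_assoc]
      all_goals abel
    rw [expand]
    have hkey : U * (s * V) + U * (s * (V * (U * V))) = U * V := by
      calc U * (s * V) + U * (s * (V * (U * V)))
          = U * (s * V) + U * ((s * (V * U)) * V) := by simp only [Matrix.mul_assoc]
      _ = U * ((s + s * (V * U)) * V) := by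
            rw [Matrix.add_mul, Matrix.mul_add]
      _ = U * ((1 : Matrix n n R) * V) := by rw [key2]
      _ = U * V := by rw [Matrix.one_mul]
    rw [hkey]; abel

lemma jacobson_qnil {R : Type*} [Ring R] {m n : Type*} [Fintype m] [Fintype n]
    [DecidableEq m] [DecidableEq n]
    (U : Matrix m n R) (V : Matrix n m R)
    (h : Quasinilpotent (V * U)) : Quasinilpotent (U * V) := by
  have step1 : ∀ t : Matrix m m R, (U * V) * t = t * (U * V) →
      IsUnit (1 + (U * V) * ((U * V) * t)) := by
    intro t ht
    have hc : (V * U) * (V * (t * U)) = (V * (t * U)) * (V * U) := by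
      calc (V * U) * (V * (t * U)) = V * ((U * V) * t) * U := by
            simp only [Matrix.mul_assoc]
      _ = V * (t * (U * V)) * U := by rw [ht]
      _ = (V * (t * U)) * (V * U) := by simp only [Matrix.mul_assoc]
    have hu := h (V * (t * U)) hc
    have h2 : IsUnit (1 + (V * (U * (V * t))) * U) := by
      have e1 : (V * (U * (V * t))) * U = (V * U) * (V * (t * U)) := by
        simp only [Matrix.mul_assoc]
      rw [e1]; exact hu
    have h3 := jacobson_isUnit U (V * (U * (V * t))) h2
    have e2 : U * (V * (U * (V * t))) = (U * V) * ((U * V) * t) := by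
      simp only [Matrix.mul_assoc]
    rwa [e2] at h3
  intro t ht
  have httc : (U * V) * (t * t) = (t * t) * (U * V) := by
    calc (U*V) * (t*t) = ((U*V)*t)*t := by rw [mul_assoc]
    _ = (t*(U*V))*t := by rw [ht]
    _ = t*((U*V)*t) := by rw [mul_assoc]
    _ = t*(t*(U*V)) := by rw [ht]
    _ = (t*t)*(U*V) := by rw [mul_assoc]
  have hsq : (1 + (U * V) * t) * (1 - (U * V) * t)
      = 1 + (U * V) * ((U * V) * (-(t * t))) := by
    have htt : ((U*V)*t)*((U*V)*t) = (U*V)*((U*V)*(t*t)) := by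
      calc ((U*V)*t)*((U*V)*t) = (U*V)*((t*(U*V))*t) := by rw [mul_assoc, mul_assoc]
      _ = (U*V)*(((U*V)*t)*t) := by rw [ht]
      _ = (U*V)*((U*V)*(t*t)) := by rw [mul_assoc]
    have : (1 + (U * V) * t) * (1 - (U * V) * t)
        = 1 - ((U*V)*t)*((U*V)*t) := by noncomm_ring
    rw [this, htt]
    have : (U*V)*((U*V)*(-(t*t))) = -((U*V)*((U*V)*(t*t))) := by
      simp only [mul_neg]
    rw [this]; abel
  have hcm : (U * V) * (-(t * t)) = (-(t * t)) * (U * V) := by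
    simp only [mul_neg, neg_mul, httc]
  have hcomm : (1 + (U * V) * t) * (1 - (U * V) * t)
      = (1 - (U * V) * t) * (1 + (U * V) * t) := by noncomm_ring
  exact isUnit_of_comm_mul hcomm (by rw [hsq]; exact step1 (-(t * t)) hcm)


section Stage2
variable {R : Type*} [Ring R] {k l : ℕ}

lemma units_stage {n : ℕ} (α e : Matrix (Fin k) (Fin k) R)
    (hee : e * e = e)
    (heα : e * α = α * e)
    (hq : Quasinilpotent (α ^ n - e)) :
    IsUnit (1 - α * (1 - e)) ∧ IsUnit (1 + α * (1 - e)) := by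
  set π : Matrix (Fin k) (Fin k) R := 1 - e with hπdef
  have hπα : π * α = α * π := by
    rw [hπdef, sub_mul, mul_sub, one_mul, mul_one, heα]
  have hπ2 : π * π = π := by
    have h0 : (1 - e) * (1 - e) = 1 - e - e + e * e := by noncomm_ring
    rw [hπdef, h0, hee]; abel
  have hπe : π * e = 0 := by
    rw [hπdef, sub_mul, one_mul, hee, sub_self]
  have heπ : e * π = 0 := by
    rw [hπdef, mul_sub, mul_one, hee, sub_self]
  have hπαc : Commute π α := hπα
  have hqπ : Commute (α ^ n - e) π := by
    have hπαc : Commute π α := hπα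
    have h1 : Commute (α ^ n) π := (hπαc.symm.pow_left n)
    have heπ : e * π = 0 := by rw [hπdef, mul_sub, mul_one, hee, sub_self]
    have hπe0 : π * e = 0 := by rw [hπdef, sub_mul, one_mul, hee, sub_self]
    have h2 : Commute e π := by
      show e * π = π * e
      rw [heπ, hπe0]
    exact h1.sub_left h2
  rcases n with _ | m
  · -- n = 0 : π = 0
    have hq0 : Quasinilpotent π := by
      have h0 := hq
      rw [pow_zero, ← hπdef] at h0
      exact h0
    have hunit : IsUnit (1 - π) := by
      have h0 := hq0 (-1) (by rw [mul_neg_one, neg_one_mul])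
      rwa [mul_neg_one, ← sub_eq_add_neg] at h0
    have hπ0 : π = 0 := by
      obtain ⟨v, hv⟩ := hunit
      have hz : (1 - π) * π = 0 := by rw [sub_mul, one_mul, hπ2, sub_self]
      calc π = (Units.val v⁻¹ * Units.val v) * π := by rw [v.inv_mul, one_mul]
      _ = Units.val v⁻¹ * ((1 - π) * π) := by rw [hv, mul_assoc]
      _ = 0 := by rw [hz, mul_zero]
    rw [hπ0, mul_zero, sub_zero, add_zero]
    exact ⟨isUnit_one, isUnit_one⟩
  · -- n = m + 1
    set γ : Matrix (Fin k) (Fin k) R := α * π with hγdef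
    set q : Matrix (Fin k) (Fin k) R := α ^ (m+1) - e with hqdef
    have hγN : γ ^ (m+1) = q * π := by
      have hc : Commute α π := (show Commute π α from hπα).symm
      have h1 : γ ^ (m+1) = α ^ (m+1) * π ^ (m+1) := hc.mul_pow (m+1)
      have h2 : π ^ (m+1) = π := IsIdempotentElem.pow_succ_eq m hπ2
      rw [h1, h2, hqdef, sub_mul, heπ, sub_zero]
    have hqπ' : q * π = π * q := hqπ.eq
    have hγNγN : γ ^ (m+1) * γ ^ (m+1) = q * (q * π) := by
      calc γ ^ (m+1) * γ ^ (m+1) = (q * π) * (q * π) := by rw [hγN]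
      _ = q * ((π * q) * π) := by rw [mul_assoc, mul_assoc]
      _ = q * ((q * π) * π) := by rw [hqπ']
      _ = q * (q * (π * π)) := by rw [mul_assoc]
      _ = q * (q * π) := by rw [hπ2]
    have hu0 : IsUnit (1 - γ ^ (m+1) * γ ^ (m+1)) := by
      have hcm : q * (-(q * π)) = (-(q * π)) * q := by
        rw [mul_neg, neg_mul, mul_assoc, hqπ']
      have h0 := hq (-(q*π)) hcm
      have he1 : 1 + q * (-(q*π)) = 1 - γ ^ (m+1) * γ ^ (m+1) := by
        rw [hγNγN, mul_neg]; abel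
      rwa [he1] at h0
    have huA : IsUnit (1 - γ ^ (m+1)) := by
      have hfac : (1 - γ^(m+1)) * (1 + γ^(m+1)) = 1 - γ^(m+1) * γ^(m+1) := by
        noncomm_ring
      have hcm : (1 - γ^(m+1)) * (1 + γ^(m+1)) = (1 + γ^(m+1)) * (1 - γ^(m+1)) := by
        noncomm_ring
      exact isUnit_of_comm_mul hcm (by rw [hfac]; exact hu0)
    constructor
    · -- 1 - γ
      set T : Matrix (Fin k) (Fin k) R := ∑ i ∈ Finset.range (m+1), γ^i with hT
      have hcγT : Commute γ T := Commute.sum_right _ _ _ (fun i _ => (Commute.refl γ).pow_right i)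
      have hgeom := geom_sum_mul γ (m+1)
      have hfac : (1 - γ) * T = 1 - γ^(m+1) := by
        have h1 : (1 - γ) * T = T * (1 - γ) := by
          rw [mul_sub, sub_mul, mul_one, one_mul, hcγT.eq]
        rw [h1]
        have h2 : T * (1 - γ) = -(T * (γ - 1)) := by noncomm_ring
        rw [h2, hgeom]; abel
      have hcm : (1 - γ) * T = T * (1 - γ) := by
        rw [mul_sub, sub_mul, mul_one, one_mul, hcγT.eq]
      exact isUnit_of_comm_mul hcm (by rw [hfac]; exact huA)
    · -- 1 + γ
      set T : Matrix (Fin k) (Fin k) R := ∑ i ∈ Finset.range (m+1), (γ*γ)^i with hT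
      have hcγT : Commute γ T := Commute.sum_right _ _ _
        (fun i _ => ((Commute.refl γ).mul_right (Commute.refl γ)).pow_right i)
      have hgeom := geom_sum_mul (γ*γ) (m+1)
      have hmulpow : (γ*γ)^(m+1) = γ^(m+1) * γ^(m+1) := (Commute.refl γ).mul_pow (m+1)
      have c0 : Commute γ T := hcγT
      have c1 : Commute (1 + γ) γ := (Commute.one_left γ).add_left (Commute.refl γ)
      have c2 : Commute (1 + γ) T := (Commute.one_left T).add_left c0
      have c3 : Commute (1 + γ) (1 - γ) := (Commute.one_right (1+γ)).sub_right c1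
      have hc : (1 + γ) * ((1 - γ) * T) = ((1 - γ) * T) * (1 + γ) := (c3.mul_right c2).eq
      have c4 : Commute (γ * γ) T := c0.mul_left c0
      have hfac2 : (1 + γ) * ((1 - γ) * T) = 1 - γ^(m+1) * γ^(m+1) := by
        have e1 : (1 + γ) * ((1 - γ) * T) = (1 - γ * γ) * T := by
          rw [← mul_assoc]
          have : (1 + γ) * (1 - γ) = 1 - γ * γ := by noncomm_ring
          rw [this]
        have e2 : (1 - γ * γ) * T = -(T * (γ * γ - 1)) := by
          have h1 : (1 - γ*γ) * T = T * (1 - γ*γ) := by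
            rw [mul_sub, sub_mul, mul_one, one_mul, c4.eq]
          rw [h1]; noncomm_ring
        rw [e1, e2, hgeom, hmulpow]; abel
      exact isUnit_of_comm_mul hc (by rw [hfac2]; exact hu0)


lemma gnsd_transfer {R : Type*} [Ring R] (n k l : ℕ)
    (A : Matrix (Fin k) (Fin l) R) (B : Matrix (Fin l) (Fin k) R)
    (h : HasGnsDrazin n (1 + A * B)) : HasGnsDrazin n (1 + B * A) := by
  obtain ⟨x, hx1, hx2, hx3⟩ := h
  set α : Matrix (Fin k) (Fin k) R := 1 + A * B with hαdef
  set β : Matrix (Fin l) (Fin l) R := 1 + B * A with hβdef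
  have hAB : A * B = α - 1 := by rw [hαdef]; abel
  have hcom : x * α = α * x := hx2 α rfl
  have hred : α * (x * x) = x := by
    calc α * (x * x) = (α * x) * x := by rw [mul_assoc]
    _ = (x * α) * x := by rw [hcom]
    _ = x := hx1
  have heα : (α * x) * α = α * (α * x) := by
    rw [mul_assoc, ← hcom, ← mul_assoc]
  have hee : (α * x) * (α * x) = α * x := by
    calc (α*x) * (α*x) = α * ((x * α) * x) := by rw [mul_assoc, mul_assoc]
    _ = α * ((α * x) * x) := by rw [hcom]
    _ = α * (α * (x * x)) := by rw [mul_assoc]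
    _ = α * x := by rw [hred]
  -- units
  obtain ⟨hu1, hu2⟩ := units_stage α (α * x) hee heα hx3
  set π : Matrix (Fin k) (Fin k) R := 1 - α * x with hπdef
  have hπ2 : π * π = π := by
    have h0 : (1 - α*x) * (1 - α*x) = 1 - α*x - α*x + (α*x) * (α*x) := by noncomm_ring
    rw [hπdef, h0, hee]; abel
  have hπα : π * α = α * π := by
    rw [hπdef, sub_mul, mul_sub, one_mul, mul_one, heα]
  have heπ : (α * x) * π = 0 := by
    rw [hπdef, mul_sub, mul_one, hee, sub_self]
  have hπe : π * (α * x) = 0 := by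
    rw [hπdef, sub_mul, one_mul, hee, sub_self]
  have hπx : π * x = 0 := by
    have hex : (α*x) * x = x := by rw [mul_assoc, hred]
    rw [hπdef, sub_mul, one_mul, hex, sub_self]
  have hxπ : x * π = 0 := by
    have hxe : x * (α*x) = x := by rw [← mul_assoc, hcom, mul_assoc, hred]
    rw [hπdef, mul_sub, mul_one, hxe, sub_self]
  -- s and w
  set s : Matrix (Fin k) (Fin k) R := Units.val hu1.unit⁻¹ with hsdef
  have hs1 : (1 - α * π) * s = 1 := by
    rw [hsdef]; exact hu1.mul_val_inv
  have hs2 : s * (1 - α * π) = 1 := by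
    rw [hsdef]; exact hu1.val_inv_mul
  have hcαaπ : Commute α (1 - α * π) :=
    (Commute.one_right α).sub_right ((Commute.refl α).mul_right (show Commute π α from hπα).symm)
  have hcπaπ : Commute π (1 - α * π) :=
    (Commute.one_right π).sub_right ((show Commute π α from hπα).mul_right (Commute.refl π))
  have hcαs : Commute α s := by
    rw [hsdef]
    exact Commute.units_inv_right (by rw [IsUnit.unit_spec hu1]; exact hcαaπ)
  have hcπs : Commute π s := by
    rw [hsdef]
    exact Commute.units_inv_right (by rw [IsUnit.unit_spec hu1]; exact hcπaπ)
  set w : Matrix (Fin k) (Fin k) R := π * s with hwdef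
  have hπw : π * w = w := by rw [hwdef, ← mul_assoc, hπ2]
  have hwπ : w * π = w := by rw [hwdef, mul_assoc, ← hcπs.eq, ← mul_assoc, hπ2]
  have hwα : w * α = α * w := by
    rw [hwdef, mul_assoc, ← hcαs.eq, ← mul_assoc, hπα, mul_assoc]
  have hαπeu : (1 - α) * π = (1 - α * π) * π := by
    rw [sub_mul, sub_mul, one_mul, mul_assoc, hπ2]
  have hw1 : (1 - α) * w = π := by
    calc (1 - α) * w = ((1 - α) * π) * s := by rw [hwdef, mul_assoc]
    _ = ((1 - α * π) * π) * s := by rw [hαπeu]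
    _ = (1 - α * π) * (s * π) := by rw [mul_assoc, hcπs.eq]
    _ = ((1 - α * π) * s) * π := by rw [mul_assoc]
    _ = π := by rw [hs1, one_mul]
  have hw1' : w * (1 - α) = π := by
    have hc : w * (1 - α) = (1 - α) * w := by
      rw [mul_sub, sub_mul, mul_one, one_mul, hwα]
    rw [hc, hw1]
  have hαw : (α - 1) * w = -π := by
    have : (α - 1) * w = -((1-α) * w) := by noncomm_ring
    rw [this, hw1]
  have hwα1 : w * (α - 1) = -π := by
    have : w * (α - 1) = -(w * (1-α)) := by noncomm_ring
    rw [this, hw1']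
  have hww : (w * w) * (α - 1) = -w := by
    rw [mul_assoc, hwα1, mul_neg, hwπ]
  have hww' : (α - 1) * (w * w) = -w := by
    rw [← mul_assoc, hαw, neg_mul, hπw]
  -- the unit α + π
  have hone : α * x + π = 1 := by rw [hπdef]; abel
  have huaux : IsUnit (α * (α * x) + π) := by
    refine ⟨⟨α * (α*x) + π, x + π, ?_, ?_⟩, rfl⟩
    · have hexp : (α * (α*x) + π) * (x + π)
          = α * ((α*x) * x) + α * ((α*x) * π) + π * x + π * π := by
        noncomm_ring
      rw [hexp, heπ, mul_zero, hπx, hπ2]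
      have hx' : (α*x) * x = x := by rw [mul_assoc, hred]
      rw [hx', add_zero, add_zero, hone]
    · have hexp : (x + π) * (α * (α*x) + π)
          = (x * α) * (α*x) + x * π + (π * α) * (α * x) + π * π := by
        noncomm_ring
      rw [hexp, hcom, hee, hxπ, hπα, mul_assoc, hπe, mul_zero, hπ2]
      rw [show α*x + 0 + 0 + π = α*x + π from by abel, hone]
  have hαπunit : IsUnit (α + π) := by
    have h1 : (α*x) * (α*π) = 0 := by
      rw [← mul_assoc, heα, mul_assoc, heπ, mul_zero]
    have h2 : π * (α*π) = α * π := by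
      rw [← mul_assoc, hπα, mul_assoc, hπ2]
    have hprod : (α * (α * x) + π) * (1 + α * π) = α + π := by
      have hexp : (α * (α*x) + π) * (1 + α * π)
          = α * (α*x) + α * ((α*x) * (α*π)) + π + π * (α*π) := by
        noncomm_ring
      rw [hexp, h1, mul_zero, add_zero, h2]
      have hsum : α * (α*x) + α * π = α := by
        rw [← mul_add, hone, mul_one]
      have hre : α * (α*x) + π + α*π = (α * (α*x) + α*π) + π := by abel
      rw [hre, hsum]
    have hmul := huaux.mul hu2
    rwa [hprod] at hmul
  -- rectangular mini lemmas
  have hadd : ∀ m m' : Matrix (Fin k) (Fin k) R,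
      B * m * A + B * m' * A = B * (m + m') * A := by
    intro m m'
    rw [Matrix.mul_add, Matrix.add_mul]
  have hsub : ∀ m m' : Matrix (Fin k) (Fin k) R,
      B * m * A - B * m' * A = B * (m - m') * A := by
    intro m m'
    rw [Matrix.mul_sub, Matrix.sub_mul]
  have hsand : ∀ m m' : Matrix (Fin k) (Fin k) R,
      (B * m * A) * (B * m' * A) = B * (m * (A * B) * m') * A := by
    intro m m'
    simp only [Matrix.mul_assoc]
  have hlmul : ∀ m : Matrix (Fin k) (Fin k) R, β * (B * m * A) = B * (α * m) * A := by
    intro m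
    have h1 : β * (B * m * A) = B * m * A + B * ((A * B) * m) * A := by
      rw [hβdef, Matrix.add_mul, Matrix.one_mul]
      congr 1
      simp only [Matrix.mul_assoc]
    have h2 : m + (α - 1) * m = α * m := by noncomm_ring
    rw [h1, hAB, hadd, h2]
  have hrmul : ∀ m : Matrix (Fin k) (Fin k) R, (B * m * A) * β = B * (m * α) * A := by
    intro m
    have h1 : (B * m * A) * β = B * m * A + B * (m * (A * B)) * A := by
      rw [hβdef, Matrix.mul_add, Matrix.mul_one]
      congr 1
      simp only [Matrix.mul_assoc]
    have h2 : m + m * (α - 1) = m * α := by noncomm_ring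
    rw [h1, hAB, hadd, h2]
  have hβn : ∀ N : ℕ, β ^ N - 1 = B * (∑ i ∈ Finset.range N, α ^ i) * A := by
    intro N
    induction N with
    | zero =>
      simp only [pow_zero, Finset.range_zero, Finset.sum_empty, Matrix.mul_zero,
        Matrix.zero_mul, sub_self]
    | succ N ih =>
      have h1 : β ^ (N + 1) - 1 = β * (β ^ N - 1) + (β - 1) := by
        rw [pow_succ', mul_sub, mul_one]; abel
      have hb1 : β - 1 = B * (1 : Matrix (Fin k) (Fin k) R) * A := by
        rw [Matrix.mul_one, hβdef]; abel
      rw [h1, ih, hlmul, hb1, hadd, geom_sum_succ]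
  -- p-layer
  have hWW : (B * w * A) * (B * w * A) = -(B * w * A) := by
    have hmid : w * (α - 1) * w = -w := by rw [hwα1, neg_mul, hπw]
    rw [hsand, hAB, hmid, Matrix.mul_neg, Matrix.neg_mul]
  have hβW : β * (B * w * A) = (B * w * A) * β := by
    rw [hlmul, hrmul, hwα]
  have hΩeq : β - B * w * A = 1 + (B * (1 - w)) * A := by
    rw [hβdef, Matrix.mul_sub, Matrix.mul_one, Matrix.sub_mul]
    abel
  have hVU : A * (B * (1 - w)) = α - 1 + π := by
    rw [← Matrix.mul_assoc, hAB, mul_sub, mul_one, hαw, sub_neg_eq_add]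
  have hΩunit : IsUnit (β - B * w * A) := by
    rw [hΩeq]
    apply jacobson_isUnit
    rw [hVU]
    have h0 : 1 + (α - 1 + π) = α + π := by abel
    rw [h0]
    exact hαπunit
  obtain ⟨ω, hω⟩ := hΩunit
  set f : Matrix (Fin l) (Fin l) R := 1 + B * w * A with hfdef
  have hff : f * f = f := by
    have h0 : (1 + B*w*A) * (1 + B*w*A)
        = 1 + B*w*A + B*w*A + (B*w*A)*(B*w*A) := by noncomm_ring
    rw [hfdef, h0, hWW]; abel
  have hβf : β * f = f * β := by
    rw [hfdef]
    have h0 : β * (1 + B*w*A) = β + β*(B*w*A) := by rw [mul_add, mul_one]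
    have h1 : (1 + B*w*A) * β = β + (B*w*A)*β := by rw [add_mul, one_mul]
    rw [h0, h1, hβW]
  have hcβΩ : β * (β - B*w*A) = (β - B*w*A) * β := by
    rw [mul_sub, sub_mul, hβW]
  have hcWΩ : (B*w*A) * (β - B*w*A) = (β - B*w*A) * (B*w*A) := by
    rw [mul_sub, sub_mul, hβW]
  have hβωi : β * Units.val ω⁻¹ = Units.val ω⁻¹ * β :=
    (Commute.units_inv_right (show Commute β (Units.val ω) by rw [hω]; exact hcβΩ)).eq
  have hWωi : (B*w*A) * Units.val ω⁻¹ = Units.val ω⁻¹ * (B*w*A) :=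
    (Commute.units_inv_right (show Commute (B*w*A) (Units.val ω) by rw [hω]; exact hcWΩ)).eq
  have hfωi : f * Units.val ω⁻¹ = Units.val ω⁻¹ * f := by
    rw [hfdef]
    have h0 : (1 + B*w*A) * Units.val ω⁻¹ = Units.val ω⁻¹ + (B*w*A) * Units.val ω⁻¹ := by
      rw [add_mul, one_mul]
    have h1 : Units.val ω⁻¹ * (1 + B*w*A) = Units.val ω⁻¹ + Units.val ω⁻¹ * (B*w*A) := by
      rw [mul_add, mul_one]
    rw [h0, h1, hWωi]
  set y : Matrix (Fin l) (Fin l) R := Units.val ω⁻¹ * f with hydef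
  have hβΩf : β * f = (β - B*w*A) * f := by
    have h0 : (β - B*w*A) * f = β * f - ((B*w*A) * f) := by noncomm_ring
    have h1 : (B*w*A) * f = B*w*A + (B*w*A)*(B*w*A) := by
      rw [hfdef, mul_add, mul_one]
    rw [h0, h1, hWW]
    abel
  have hβy : β * y = f := by
    calc β * y = (β * Units.val ω⁻¹) * f := by rw [hydef, mul_assoc]
    _ = (Units.val ω⁻¹ * β) * f := by rw [hβωi]
    _ = Units.val ω⁻¹ * (β * f) := by rw [mul_assoc]
    _ = Units.val ω⁻¹ * ((β - B*w*A) * f) := by rw [hβΩf]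
    _ = Units.val ω⁻¹ * ((Units.val ω) * f) := by rw [← hω]
    _ = (Units.val ω⁻¹ * Units.val ω) * f := by rw [mul_assoc]
    _ = f := by rw [ω.inv_mul, one_mul]
  have hyβ : y * β = f := by
    calc y * β = Units.val ω⁻¹ * (f * β) := by rw [hydef, mul_assoc]
    _ = Units.val ω⁻¹ * (β * f) := by rw [hβf]
    _ = Units.val ω⁻¹ * ((β - B*w*A) * f) := by rw [hβΩf]
    _ = Units.val ω⁻¹ * ((Units.val ω) * f) := by rw [← hω]
    _ = (Units.val ω⁻¹ * Units.val ω) * f := by rw [mul_assoc]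
    _ = f := by rw [ω.inv_mul, one_mul]
  have hyy : y * β * y = y := by
    rw [hyβ]
    calc f * y = (f * Units.val ω⁻¹) * f := by rw [hydef, mul_assoc]
    _ = (Units.val ω⁻¹ * f) * f := by rw [hfωi]
    _ = Units.val ω⁻¹ * (f * f) := by rw [mul_assoc]
    _ = y := by rw [hff, hydef]
  refine ⟨y, hyy, ?_, ?_⟩
  · -- double commutant
    intro z hz
    have hzBA : z * (B * A) = (B * A) * z := by
      have h0 := hz
      rw [hβdef, mul_add, add_mul, mul_one, one_mul] at h0
      exact add_left_cancel h0
    have hmid : (A*z*B) * (A*B) = (A*B) * (A*z*B) := by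
      calc (A*z*B) * (A*B) = (A*(z*(B*A)))*B := by simp only [Matrix.mul_assoc]
      _ = (A*((B*A)*z))*B := by rw [hzBA]
      _ = (A*B) * (A*z*B) := by simp only [Matrix.mul_assoc]
    have hz'α : (A*z*B) * α = α * (A*z*B) := by
      rw [hαdef, mul_add, add_mul, mul_one, one_mul, hmid]
    have hzx := hx2 (A*z*B) hz'α
    have cα : Commute (A*z*B) α := hz'α
    have cx : Commute (A*z*B) x := hzx.symm
    have ce : Commute (A*z*B) (α * x) := cα.mul_right cx
    have cπ : Commute (A*z*B) π := by
      rw [hπdef]; exact (Commute.one_right _).sub_right ce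
    have caπ : Commute (A*z*B) (1 - α*π) :=
      (Commute.one_right _).sub_right (cα.mul_right cπ)
    have cs : Commute (A*z*B) s := by
      rw [hsdef]
      exact Commute.units_inv_right (by rw [IsUnit.unit_spec hu1]; exact caπ)
    have cw : Commute (A*z*B) w := by
      rw [hwdef]; exact cπ.mul_right cs
    have hwz : (A*z*B) * w = w * (A*z*B) := cw.eq
    have hbr1 : (B*w*A)*(z*(B*w*A)) = -((B*w*A)*z) := by
      calc (B*w*A)*(z*(B*w*A)) = (B*w)*(((A*z*B)*w)*A) := by simp only [Matrix.mul_assoc]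
      _ = (B*w)*((w*(A*z*B))*A) := by rw [hwz]
      _ = ((B*(w*w))*A)*(z*(B*A)) := by simp only [Matrix.mul_assoc]
      _ = ((B*(w*w))*A)*((B*A)*z) := by rw [hzBA]
      _ = (B*((w*w)*(A*B)))*(A*z) := by simp only [Matrix.mul_assoc]
      _ = (B*(-w))*(A*z) := by rw [hAB, hww]
      _ = -((B*w*A)*z) := by
        simp only [Matrix.neg_mul, Matrix.mul_neg, Matrix.mul_assoc]
    have hbr2 : (B*w*A)*(z*(B*w*A)) = -(z*(B*w*A)) := by
      calc (B*w*A)*(z*(B*w*A)) = (B*(w*(A*z*B)))*(w*A) := by simp only [Matrix.mul_assoc]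
      _ = (B*((A*z*B)*w))*(w*A) := by rw [← hwz]
      _ = ((B*A)*z)*((B*(w*w))*A) := by simp only [Matrix.mul_assoc]
      _ = (z*(B*A))*((B*(w*w))*A) := by rw [← hzBA]
      _ = z*((B*((A*B)*(w*w)))*A) := by simp only [Matrix.mul_assoc]
      _ = z*((B*(-w))*A) := by rw [hAB, hww']
      _ = -(z*(B*w*A)) := by
        simp only [Matrix.neg_mul, Matrix.mul_neg, Matrix.mul_assoc]
    have hzW : z * (B*w*A) = (B*w*A) * z := by
      have h0 : -((B*w*A)*z) = -(z*(B*w*A)) := hbr1.symm.trans hbr2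
      exact (neg_inj.mp h0).symm
    have hzΩ : z * (β - B*w*A) = (β - B*w*A) * z := by
      rw [mul_sub, sub_mul, hz, hzW]
    have czω : Commute z (Units.val ω) := by rw [hω]; exact hzΩ
    have czf : Commute z f := by
      rw [hfdef]
      exact (Commute.one_right z).add_right (show Commute z (B*w*A) from hzW)
    have czy : Commute z y := by
      rw [hydef]
      exact (czω.units_inv_right).mul_right czf
    exact czy.eq.symm
  · -- quasinilpotent part
    rw [hβy]
    have hq'eq : β ^ n - f = B * ((∑ i ∈ Finset.range n, α ^ i) - w) * A := by
      rw [← hsub, ← hβn n, hfdef]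
      abel
    rw [hq'eq]
    apply jacobson_qnil (B * ((∑ i ∈ Finset.range n, α ^ i) - w)) A
    have hvu : A * (B * ((∑ i ∈ Finset.range n, α ^ i) - w)) = α ^ n - α * x := by
      rw [← Matrix.mul_assoc, hAB, mul_sub, mul_geom_sum, hαw, sub_neg_eq_add, hπdef]
      abel
    rw [hvu]
    exact hx3


end Stage2

theorem stmt4 {R : Type*} [Ring R] (n k l : ℕ)
    (A : Matrix (Fin k) (Fin l) R) (B : Matrix (Fin l) (Fin k) R) :
    HasGnsDrazin n (1 + A * B) ↔ HasGnsDrazin n (1 + B * A) :=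
  ⟨fun h => gnsd_transfer n k l A B h, fun h => gnsd_transfer n l k B A h⟩
end

section
/- Let R be a ring, a, c ∈ R, α = 1 − ac, p an idempotent with pα = αp and 1 − (1−p)α a unit. Then q := c(1−p)(1 − (1−p)α)^{−1}a is an idempotent in R. -/
theorem stmt8 {R : Type*} [Ring R] (a c p : R) (hp : p * p = p)
    (hcomm : p * (1 - a * c) = (1 - a * c) * p)
    (u : Rˣ) (hu : (u : R) = 1 - (1 - p) * (1 - a * c)) :
    (c * (1 - p) * (↑u⁻¹ : R) * a) * (c * (1 - p) * (↑u⁻¹ : R) * a)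
      = c * (1 - p) * (↑u⁻¹ : R) * a := by
  have hpc : p * (a * c) = a * c * p := by
    have h := hcomm
    simp only [mul_sub, sub_mul, mul_one, one_mul] at h
    exact sub_right_inj.mp h
  have h0 : p * (1 - p) = 0 := by rw [mul_sub, mul_one, hp, sub_self]
  have h1 : (1 - p) * p = 0 := by rw [sub_mul, one_mul, hp, sub_self]
  have h1p2 : (1 - p) * (1 - p) = 1 - p := by
    rw [mul_sub, mul_one, h1, sub_zero]
  have hpu : p * (u : R) = p := by
    rw [hu, mul_sub, mul_one, ← mul_assoc, h0, zero_mul, sub_zero]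
  have hup : (u : R) * p = p := by
    rw [hu, sub_mul, one_mul, mul_assoc, ← hcomm, ← mul_assoc, h1, zero_mul,
      sub_zero]
  have hvp : (↑u⁻¹ : R) * p = p := by
    calc (↑u⁻¹ : R) * p = (↑u⁻¹ : R) * ((u : R) * p) := by rw [hup]
    _ = p := by rw [← mul_assoc, u.inv_mul, one_mul]
  have hpv : p * (↑u⁻¹ : R) = p := by
    calc p * (↑u⁻¹ : R) = (p * (u : R)) * (↑u⁻¹ : R) := by rw [hpu]
    _ = p := by rw [mul_assoc, u.mul_inv, mul_one]
  have hv1p : (↑u⁻¹ : R) * (1 - p) = (1 - p) * (↑u⁻¹ : R) := by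
    rw [mul_sub, sub_mul, mul_one, one_mul, hvp, hpv]
  have key : a * c * (1 - p) = (u : R) - p := by
    rw [hu]; noncomm_ring [hpc]
  have h2 : ((u : R) - p) * ((↑u⁻¹ : R) * a) = (1 - p) * a := by
    rw [sub_mul, ← mul_assoc, u.mul_inv, one_mul, ← mul_assoc, hpv, sub_mul,
      one_mul]
  calc (c * (1 - p) * (↑u⁻¹ : R) * a) * (c * (1 - p) * (↑u⁻¹ : R) * a)
      = c * (1 - p) * (↑u⁻¹ : R) * (a * c * (1 - p) * ((↑u⁻¹ : R) * a)) := by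
        noncomm_ring
    _ = c * (1 - p) * (↑u⁻¹ : R) * ((1 - p) * a) := by rw [key, h2]
    _ = c * ((1 - p) * ((↑u⁻¹ : R) * (1 - p))) * a := by noncomm_ring
    _ = c * (((1 - p) * (1 - p)) * (↑u⁻¹ : R)) * a := by
        rw [hv1p]; noncomm_ring
    _ = c * (1 - p) * (↑u⁻¹ : R) * a := by rw [h1p2]; noncomm_ring
end

section
/- Let 𝒜 be a complex Banach algebra and a, b, c, d ∈ 𝒜 satisfy acd = dbd and bdb = bac. If 1 − ac has a generalized n-strongly Drazin inverse, then 1 − bd has a generalized n-strongly Drazin inverse. -/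
/-!
Write `m = a * c`, `α = 1 - m` and `β = 1 - b * d`. The hypotheses `m * d = d * b * d` and
`b * d * b = b * m` (which hold for `m = d * b`, the setting of Jacobson's lemma) make
`z ↦ 1 + b * z * d` carry identities about `α` over to identities about `β`.

Let `x` be the generalized `n`-strongly Drazin inverse of `α` and `p = 1 - α * x`. Since
`(α * p) ^ (n + 1) = (α ^ n - α * x) * (α * p)`, the element `α * p` is quasinilpotent, so `m` is
invertible on the range of `p`, with an inverse `h` in the double commutant of `α`. The inverse
for `β` is `y = 1 + b * (x - h) * d`: one has `β * y = y * β = 1 - b * h * d`, `y * β * y = y`, and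
`β ^ n - β * y = b * z * d` with `z * m = α ^ n - α * x`. Quasinilpotency passes from `z * m` to
`b * z * d` because `(z * d * b) ^ 2 = (z * m) * (z * d * b)` and `u * v`, `v * u` have the same
nonzero spectrum. Finally, if `t` commutes with `β` then `d * t * b` commutes with `m`, which
makes `t` commute with `b * h * d = b * (h * h * m) * d`, hence with `β * y`, hence with `y`.
-/

open Filter Finset

namespace InDoubleCommutant

variable {R : Type*} [Ring R] {a x y : R}

lemma self (a : R) : InDoubleCommutant a a := fun _ hy => hy.symm

lemma one : InDoubleCommutant (1 : R) a := fun t _ => Commute.one_left t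

lemma mul (hx : InDoubleCommutant x a) (hy : InDoubleCommutant y a) :
    InDoubleCommutant (x * y) a :=
  fun t ht => Commute.mul_left (hx t ht) (hy t ht)

lemma sub (hx : InDoubleCommutant x a) (hy : InDoubleCommutant y a) :
    InDoubleCommutant (x - y) a :=
  fun t ht => Commute.sub_left (hx t ht) (hy t ht)

lemma pow (hx : InDoubleCommutant x a) (k : ℕ) : InDoubleCommutant (x ^ k) a :=
  fun t ht => Commute.pow_left (hx t ht) k

lemma sum {ι : Type*} (s : Finset ι) {f : ι → R}
    (hf : ∀ i ∈ s, InDoubleCommutant (f i) a) :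
    InDoubleCommutant (∑ i ∈ s, f i) a :=
  fun t ht => Commute.sum_left s f t fun i hi => hf i hi t ht

lemma units_inv {u : Rˣ} (hu : InDoubleCommutant (u : R) a) :
    InDoubleCommutant (↑u⁻¹ : R) a :=
  fun t ht => Commute.units_inv_left (hu t ht)

lemma commute (hx : InDoubleCommutant x a) {t : R} (ht : Commute t a) : Commute x t :=
  hx t ht

lemma of_one_sub (hx : InDoubleCommutant x (1 - a)) : InDoubleCommutant x a :=
  fun t ht => hx t ((Commute.one_right t).sub_right ht)

end InDoubleCommutant

namespace Quasinilpotent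

variable {R : Type*} [Ring R] {q : R}

lemma isUnit_one_sub (hq : Quasinilpotent q) : IsUnit (1 - q) := by
  simpa [sub_eq_add_neg] using hq (-1) (by simp)

lemma of_pow {n : ℕ} (hq : Quasinilpotent (q ^ n)) : Quasinilpotent q := by
  intro y hy
  have hqy : Commute q (-y) := Commute.neg_right hy
  have hfactor : (1 + q * y) * ∑ i ∈ range n, (-(q * y)) ^ i = 1 + q ^ n * -(-y) ^ n := by
    rw [← sub_neg_eq_add, mul_neg_geom_sum, ← mul_neg, hqy.mul_pow, mul_neg, sub_eq_add_neg]
  have hcomm : Commute (1 + q * y) (∑ i ∈ range n, (-(q * y)) ^ i) := by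
    rw [← sub_neg_eq_add]
    exact (Commute.one_left _).sub_left
      (Commute.sum_right _ _ _ fun i _ => (Commute.refl _).pow_right i)
  have hunit := hq _ (hqy.pow_pow n n).neg_right
  rw [← hfactor] at hunit
  exact (hcomm.isUnit_mul_iff.mp hunit).1

end Quasinilpotent

section Ring

variable {R : Type*} [Ring R]

lemma Commute.of_outer_inverse {t u y : R} (hy : y * u * y = y) (huy : Commute u y)
    (htu : Commute t u) (ht : Commute t (u * y)) : Commute t y := by
  have hfy : u * y * y = y := by rw [huy.eq, hy]
  have hyf : y * (u * y) = y := by rw [← mul_assoc, hy]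
  calc t * y = t * (u * y) * y := by rw [mul_assoc, hfy]
    _ = y * (u * t) * y := by rw [ht.eq, huy.eq]; simp only [mul_assoc]
    _ = y * (t * (u * y)) := by rw [← htu.eq]; simp only [mul_assoc]
    _ = y * t := by rw [ht.eq, ← mul_assoc, hyf]

lemma exists_inverse_one_sub_of_isUnit {a x : R} (hx : x * a * x = x)
    (hxa : InDoubleCommutant x a) (hu : IsUnit (1 - a * (1 - a * x))) :
    ∃ h, InDoubleCommutant h a ∧ h * (1 - a) = 1 - a * x ∧ h * (1 - a * x) = h := by
  obtain ⟨u, hu⟩ := hu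
  set p := 1 - a * x
  have hp : InDoubleCommutant p a := .sub .one ((InDoubleCommutant.self a).mul hxa)
  have hpp : p * p = p := by
    refine IsIdempotentElem.one_sub ?_
    rw [IsIdempotentElem, ← mul_assoc, mul_assoc a x a, mul_assoc a, hx]
  clear_value p
  have hpu : p * (1 - a) = u * p := by
    rw [hu, sub_mul, one_mul, mul_assoc, hpp, mul_sub, mul_one, hp a rfl]
  have hu' : InDoubleCommutant (u : R) a := hu ▸ .sub .one ((InDoubleCommutant.self a).mul hp)
  refine ⟨↑u⁻¹ * p, hu'.units_inv.mul hp, ?_, ?_⟩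
  · rw [mul_assoc, hpu, ← mul_assoc, Units.inv_mul, one_mul]
  · rw [mul_assoc, hpp]

end Ring

section Spectrum

variable {𝕜 A : Type*} [NormedField 𝕜] [Ring A] [Algebra 𝕜 A]

lemma spectralRadius_eq_zero_iff {a : A} :
    spectralRadius 𝕜 a = 0 ↔ spectrum 𝕜 a ⊆ {0} := by
  simp [spectralRadius, Set.subset_def]

lemma Quasinilpotent.spectrum_subset {q : A} (hq : Quasinilpotent q) : spectrum 𝕜 q ⊆ {0} := by
  intro k hk
  by_contra hk0
  apply spectrum.mem_iff.mp hk
  have hfactor :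
      algebraMap 𝕜 A k - q = algebraMap 𝕜 A k * (1 + q * algebraMap 𝕜 A (-k⁻¹)) := by
    rw [mul_add, mul_one, ← Algebra.commutes (-k⁻¹) q, ← mul_assoc, ← map_mul, mul_neg,
      mul_inv_cancel₀ hk0, map_neg, map_one, neg_one_mul, sub_eq_add_neg]
  rw [hfactor]
  exact ((Units.mk0 k hk0).isUnit.map (algebraMap 𝕜 A)).mul (hq _ (Algebra.commutes _ q).symm)

end Spectrum

section Banach

variable {A : Type*} [NormedRing A] [NormedAlgebra ℂ A] [CompleteSpace A]

lemma spectralRadius_mul_le_of_commute {q v : A} (h : Commute q v) :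
    spectralRadius ℂ (q * v) ≤ spectralRadius ℂ q * ‖v‖₊ := by
  refine le_of_tendsto_of_tendsto (spectrum.gelfand_formula (q * v))
    (ENNReal.Tendsto.mul_const (spectrum.gelfand_formula q) (Or.inr ENNReal.coe_ne_top)) ?_
  filter_upwards [eventually_ne_atTop 0] with k hk
  have hnorm : ‖(q * v) ^ k‖₊ ≤ ‖q ^ k‖₊ * ‖v‖₊ ^ k := by
    rw [h.mul_pow]
    exact (nnnorm_mul_le _ _).trans (by gcongr; exact nnnorm_pow_le' v (Nat.pos_of_ne_zero hk))
  calc (‖(q * v) ^ k‖₊ : ENNReal) ^ (1 / k : ℝ)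
      ≤ ((‖q ^ k‖₊ * ‖v‖₊ ^ k : NNReal) : ENNReal) ^ (1 / k : ℝ) := by gcongr
    _ = (‖q ^ k‖₊ : ENNReal) ^ (1 / k : ℝ) * ‖v‖₊ := by
      rw [ENNReal.coe_mul, ENNReal.mul_rpow_of_nonneg _ _ (by positivity), ENNReal.coe_pow,
        one_div, ENNReal.pow_rpow_inv_natCast hk]

lemma spectrum_mul_subset_zero_of_commute {q v : A} (hq : spectrum ℂ q ⊆ {0})
    (h : Commute q v) :
    spectrum ℂ (q * v) ⊆ {0} := by
  rw [← spectralRadius_eq_zero_iff] at hq ⊢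
  refine nonpos_iff_eq_zero.mp ?_
  calc spectralRadius ℂ (q * v) ≤ spectralRadius ℂ q * ‖v‖₊ :=
        spectralRadius_mul_le_of_commute h
    _ = 0 := by rw [hq, zero_mul]

lemma quasinilpotent_iff_spectrum_subset {q : A} : Quasinilpotent q ↔ spectrum ℂ q ⊆ {0} := by
  refine ⟨Quasinilpotent.spectrum_subset, fun hq y hy => ?_⟩
  have hneg : (-1 : ℂ) ∉ spectrum ℂ (q * y) :=
    fun h => by simpa using spectrum_mul_subset_zero_of_commute hq hy h
  rw [spectrum.notMem_iff, map_neg, map_one, ← neg_add'] at hneg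
  exact (IsUnit.neg_iff _).mp hneg

namespace Quasinilpotent

lemma mul_of_commute {q v : A} (hq : Quasinilpotent q) (h : Commute q v) :
    Quasinilpotent (q * v) := by
  rw [quasinilpotent_iff_spectrum_subset] at hq ⊢
  exact spectrum_mul_subset_zero_of_commute hq h

lemma mul_comm {u v : A} (h : Quasinilpotent (u * v)) : Quasinilpotent (v * u) := by
  rw [quasinilpotent_iff_spectrum_subset, ← Set.sdiff_eq_empty] at h ⊢
  rwa [← spectrum.nonzero_mul_comm]

end Quasinilpotent

lemma quasinilpotent_mul_one_sub_mul {a x : A} {n : ℕ} (hx : x * a * x = x) (hxa : Commute x a)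
    (hq : Quasinilpotent (a ^ n - a * x)) : Quasinilpotent (a * (1 - a * x)) := by
  set p := 1 - a * x
  have hax : Commute a (a * x) := (Commute.refl a).mul_right hxa.symm
  have hap : Commute a p := (Commute.one_right a).sub_right hax
  have hp : IsIdempotentElem p := by
    refine IsIdempotentElem.one_sub ?_
    rw [IsIdempotentElem, ← mul_assoc, mul_assoc a x a, mul_assoc a, hx]
  have hxp : x * p = 0 := by rw [mul_sub, mul_one, ← mul_assoc, hx, sub_self]
  have hQ : Commute (a ^ n - a * x) (a * p) :=
    (((Commute.refl a).pow_left n).sub_left hax.symm).mul_right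
      ((Commute.one_right _).sub_right ((hax.pow_left n).sub_left (Commute.refl _)))
  have hxap : a * x * (a * p) = 0 := by
    rw [← mul_assoc, mul_assoc a x a, hxa.eq, ← mul_assoc, mul_assoc, hxp, mul_zero]
  have hpow : (a * p) ^ (n + 1) = (a ^ n - a * x) * (a * p) := by
    rw [hap.mul_pow, hp.pow_succ_eq, pow_succ, mul_assoc, sub_mul, hxap, sub_zero]
  exact Quasinilpotent.of_pow (hpow ▸ hq.mul_of_commute hQ)

end Banach

section Jacobson

variable {R : Type*} [Ring R] {b d m x h : R}

lemma commute_mul_of_jacobson (hmd : m * d = d * b * d) (hbm : b * d * b = b * m) :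
    Commute (d * b) m :=
  calc d * b * m = d * (b * d * b) := by rw [hbm, mul_assoc]
    _ = m * (d * b) := by rw [← mul_assoc, ← mul_assoc, ← hmd, mul_assoc]

lemma one_sub_mul_one_add_of_jacobson (hbm : b * d * b = b * m) (z : R) :
    (1 - b * d) * (1 + b * z * d) = 1 + b * ((1 - m) * z - 1) * d :=
  calc (1 - b * d) * (1 + b * z * d) = 1 + b * z * d - b * d - b * d * b * z * d := by noncomm_ring
    _ = _ := by rw [hbm]; noncomm_ring

lemma one_add_mul_one_sub_of_jacobson (hmd : m * d = d * b * d) (z : R) :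
    (1 + b * z * d) * (1 - b * d) = 1 + b * (z * (1 - m) - 1) * d :=
  calc (1 + b * z * d) * (1 - b * d) = 1 + b * z * d - b * d - b * z * (d * b * d) := by
        noncomm_ring
    _ = _ := by rw [← hmd]; noncomm_ring

lemma mul_mul_of_jacobson (hmd : m * d = d * b * d) {w : R} (hw : Commute (d * b) w) (z : R) :
    (b * z * d) * (b * w * d) = b * (z * w * m) * d :=
  calc (b * z * d) * (b * w * d) = b * z * (d * b * w) * d := by noncomm_ring
    _ = b * z * w * (m * d) := by rw [hw.eq, hmd]; noncomm_ring
    _ = _ := by noncomm_ring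

lemma one_sub_pow_of_jacobson (hbm : b * d * b = b * m) (k : ℕ) :
    (1 - b * d) ^ k = 1 - b * (∑ i ∈ range k, (1 - m) ^ i) * d := by
  induction k with
  | zero => simp
  | succ k ih =>
    calc (1 - b * d) ^ (k + 1) = (1 - b * d) * (1 + b * -(∑ i ∈ range k, (1 - m) ^ i) * d) := by
          rw [pow_succ', ih]; noncomm_ring
      _ = 1 - b * ((1 - m) * ∑ i ∈ range k, (1 - m) ^ i + 1) * d := by
          rw [one_sub_mul_one_add_of_jacobson hbm]; noncomm_ring
      _ = _ := by rw [geom_sum_succ]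

lemma commute_mul_mul_of_jacobson (hmd : m * d = d * b * d) (hbm : b * d * b = b * m) {t : R}
    (ht : Commute t (b * d)) : Commute (d * t * b) m :=
  calc d * t * b * m = d * (t * (b * d)) * b := by rw [mul_assoc _ b, ← hbm]; noncomm_ring
    _ = m * (d * t * b) := by rw [ht.eq, ← mul_assoc, ← mul_assoc, ← hmd]; noncomm_ring

lemma commute_mul_mul_mul_of_jacobson (hmd : m * d = d * b * d) (hbm : b * d * b = b * m)
    {t u : R} (ht : Commute t (b * d)) (hu : Commute u (d * t * b)) (hum : Commute u m) :
    Commute t (b * (u * m) * d) :=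
  calc t * (b * (u * m) * d) = t * (b * m * u * d) := by rw [hum.eq]; noncomm_ring
    _ = t * (b * d) * (b * u * d) := by rw [← hbm]; noncomm_ring
    _ = b * (d * t * b * u) * d := by rw [ht.eq]; noncomm_ring
    _ = b * u * d * (t * (b * d)) := by rw [← hu.eq]; noncomm_ring
    _ = b * u * (m * d) * t := by rw [ht.eq, hmd]; noncomm_ring
    _ = b * (u * m) * d * t := by noncomm_ring

lemma one_sub_mul_one_add_sub_of_jacobson (hbm : b * d * b = b * m) (hhm : h * m = 1 - (1 - m) * x)
    (hmh : Commute h m) : (1 - b * d) * (1 + b * (x - h) * d) = 1 - b * h * d := by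
  have key : (1 - m) * (x - h) - 1 = -h :=
    calc (1 - m) * (x - h) - 1 = (1 - m) * x - h + m * h - 1 := by noncomm_ring
      _ = -h := by rw [← hmh.eq, hhm]; abel
  rw [one_sub_mul_one_add_of_jacobson hbm, key]
  noncomm_ring

lemma one_add_sub_mul_one_sub_of_jacobson (hmd : m * d = d * b * d) (hhm : h * m = 1 - (1 - m) * x)
    (hxm : Commute x m) : (1 + b * (x - h) * d) * (1 - b * d) = 1 - b * h * d := by
  have key : (x - h) * (1 - m) - 1 = -h :=
    calc (x - h) * (1 - m) - 1 = x - x * m - h + h * m - 1 := by noncomm_ring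
      _ = -h := by rw [hhm, hxm.eq]; noncomm_ring
  rw [one_add_mul_one_sub_of_jacobson hmd, key]
  noncomm_ring

lemma mul_mul_self_of_jacobson (hmd : m * d = d * b * d) (hbm : b * d * b = b * m)
    (hx : x * (1 - m) * x = x) (hh : InDoubleCommutant h m) (hhm : h * m = 1 - (1 - m) * x)
    (hhp : h * (1 - (1 - m) * x) = h) :
    (1 + b * (x - h) * d) * (1 - b * d) * (1 + b * (x - h) * d) = 1 + b * (x - h) * d := by
  have key : (x - h) * h * m = -h := by
    rw [mul_assoc, hhm, sub_mul, hhp, mul_sub, mul_one, ← mul_assoc, hx, sub_self, zero_sub]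
  rw [mul_assoc, one_sub_mul_one_add_sub_of_jacobson hbm hhm (hh.commute (.refl m))]
  calc (1 + b * (x - h) * d) * (1 - b * h * d)
      = 1 + b * (x - h) * d - b * h * d - (b * (x - h) * d) * (b * h * d) := by noncomm_ring
    _ = 1 + b * (x - h) * d := by
      rw [mul_mul_of_jacobson hmd (hh.commute (commute_mul_of_jacobson hmd hbm)).symm, key]
      noncomm_ring

lemma inDoubleCommutant_of_jacobson (hmd : m * d = d * b * d) (hbm : b * d * b = b * m)
    (hx : x * (1 - m) * x = x) (hxm : Commute x m) (hh : InDoubleCommutant h m)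
    (hhm : h * m = 1 - (1 - m) * x) (hhp : h * (1 - (1 - m) * x) = h) :
    InDoubleCommutant (1 + b * (x - h) * d) (1 - b * d) := by
  intro t ht
  have htbd : Commute t (b * d) := by simpa using (Commute.one_right t).sub_right ht
  have hs := commute_mul_mul_of_jacobson hmd hbm htbd
  have hthd : Commute t (b * h * d) := by
    have := commute_mul_mul_mul_of_jacobson hmd hbm htbd ((hh.mul hh).commute hs)
      ((hh.mul hh).commute (.refl m))
    rwa [mul_assoc h, hhm, hhp] at this
  have hleft := one_sub_mul_one_add_sub_of_jacobson hbm hhm (hh.commute (.refl m))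
  refine (Commute.of_outer_inverse (mul_mul_self_of_jacobson hmd hbm hx hh hhm hhp)
    (hleft.trans (one_add_sub_mul_one_sub_of_jacobson hmd hhm hxm).symm) ht ?_).symm
  rw [hleft]
  exact (Commute.one_right t).sub_right hthd

end Jacobson

section BanachJacobson

variable {A : Type*} [NormedRing A] [NormedAlgebra ℂ A] [CompleteSpace A] {b d m : A}

lemma quasinilpotent_mul_mul_of_jacobson (hmd : m * d = d * b * d) (hbm : b * d * b = b * m)
    {z : A} (hzd : Commute z (d * b)) (hzm : Commute z m) (hq : Quasinilpotent (z * m)) :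
    Quasinilpotent (b * z * d) := by
  have hdbm := commute_mul_of_jacobson hmd hbm
  have hsq : (z * (d * b)) ^ 2 = z * m * (z * (d * b)) :=
    calc (z * (d * b)) ^ 2 = z * (d * b * z) * (d * b) := by rw [sq]; noncomm_ring
      _ = z * z * (d * (b * d * b)) := by rw [← hzd.eq]; noncomm_ring
      _ = z * z * (d * b * m) := by rw [hbm]; noncomm_ring
      _ = z * (z * m) * (d * b) := by rw [hdbm.eq]; noncomm_ring
      _ = z * m * (z * (d * b)) := by rw [((Commute.refl z).mul_right hzm).eq]; noncomm_ring
  have hcomm : Commute (z * m) (z * (d * b)) :=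
    ((Commute.refl z).mul_left hzm.symm).mul_right (hzd.mul_left hdbm.symm)
  have hzdb : Quasinilpotent (z * d * b) := by
    rw [mul_assoc]
    exact Quasinilpotent.of_pow (hsq ▸ hq.mul_of_commute hcomm)
  simpa only [mul_assoc] using hzdb.mul_comm

theorem HasGnsDrazin.one_sub_mul_of_jacobson {n : ℕ} (hmd : m * d = d * b * d)
    (hbm : b * d * b = b * m) (hm : HasGnsDrazin n (1 - m)) : HasGnsDrazin n (1 - b * d) := by
  obtain ⟨x, hx, hxc, hq⟩ := hm
  obtain ⟨h, hhc, hhm, hhp⟩ := exists_inverse_one_sub_of_isUnit hx hxc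
    (quasinilpotent_mul_one_sub_mul hx (hxc.commute (.refl _)) hq).isUnit_one_sub
  rw [sub_sub_cancel] at hhm
  have hh : InDoubleCommutant h m := hhc.of_one_sub
  set z := h - ∑ i ∈ range n, (1 - m) ^ i
  have hz : InDoubleCommutant z m :=
    hh.sub (.sum _ fun i _ => (InDoubleCommutant.one.sub (.self m)).pow i)
  have hzm : z * m = (1 - m) ^ n - (1 - m) * x := by
    have hgeom := geom_sum_mul_neg (1 - m) n
    rw [sub_sub_cancel] at hgeom
    rw [sub_mul, hhm, hgeom]
    abel
  refine ⟨1 + b * (x - h) * d, mul_mul_self_of_jacobson hmd hbm hx hh hhm hhp,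
    inDoubleCommutant_of_jacobson hmd hbm hx (hxc.of_one_sub.commute (.refl m)) hh hhm hhp, ?_⟩
  rw [one_sub_pow_of_jacobson hbm,
    one_sub_mul_one_add_sub_of_jacobson hbm hhm (hh.commute (.refl m)),
    sub_sub_sub_cancel_left, ← sub_mul, ← mul_sub]
  exact quasinilpotent_mul_mul_of_jacobson hmd hbm (hz.commute (commute_mul_of_jacobson hmd hbm))
    (hz.commute (.refl m)) (hzm ▸ hq)

end BanachJacobson

theorem stmt12 {A : Type*} [NormedRing A] [NormedAlgebra ℂ A] [CompleteSpace A]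
    (n : ℕ) (a b c d : A) (h1 : a * c * d = d * b * d) (h2 : b * d * b = b * a * c)
    (h : HasGnsDrazin n (1 - a * c)) : HasGnsDrazin n (1 - b * d) :=
  h.one_sub_mul_of_jacobson h1 (by rw [h2, mul_assoc])
end

section
/- Let R be a ring, a, b, c, d ∈ R with acd = dbd and dba = aca, n ∈ ℕ. Set c' = ∑_{i=1}^{n} (−1)^{i−1} C(n,i) c(ac)^{i−1} and b' = ∑_{i=1}^{n} (−1)^{i−1} C(n,i) (bd)^{i−1}b. Then ac'd = db'd and db'a = ac'a. -/
private lemma pull {R : Type*} [Ring R] (C x y X : R) (hCx : x * C = C * x) :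
    x * (C * X) * y = C * (x * X * y) := by
  rw [show x * (C * X) = C * (x * X) from by rw [← mul_assoc, hCx, mul_assoc], mul_assoc]

private lemma key1 {R : Type*} [Ring R] (a b c d : R)
    (h1 : a * c * d = d * b * d) :
    ∀ i : ℕ, (a * c) ^ (i + 1) * d = (d * b) ^ (i + 1) * d := by
  intro i
  induction i with
  | zero => simpa [mul_assoc] using h1
  | succ k ih =>
    have : (a * c) ^ (k + 2) * d = (a * c) ^ (k + 1) * d * (b * d) := by
      rw [pow_succ, mul_assoc, mul_assoc, ← mul_assoc a c d, h1]
      simp [mul_assoc]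
    rw [this, ih]
    simp [pow_succ, mul_assoc]

private lemma key2 {R : Type*} [Ring R] (a b c d : R)
    (h2 : d * b * a = a * c * a) :
    ∀ i : ℕ, (d * b) ^ (i + 1) * a = (a * c) ^ (i + 1) * a := by
  intro i
  induction i with
  | zero => simpa [mul_assoc] using h2
  | succ k ih =>
    have : (d * b) ^ (k + 2) * a = (d * b) ^ (k + 1) * a * (c * a) := by
      rw [pow_succ, mul_assoc, mul_assoc, ← mul_assoc d b a, h2]
      simp [mul_assoc]
    rw [this, ih]
    simp [pow_succ, mul_assoc]

private lemma hBlem {R : Type*} [Ring R] (b d : R) :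
    ∀ j : ℕ, d * ((b * d) ^ j * b) = (d * b) ^ (j + 1) := by
  intro j
  induction j with
  | zero => simp
  | succ k ih =>
    calc d * ((b * d) ^ (k + 1) * b) = d * b * (d * ((b * d) ^ k * b)) := by
          rw [pow_succ']; simp [mul_assoc]
      _ = d * b * (d * b) ^ (k + 1) := by rw [ih]
      _ = (d * b) ^ (k + 2) := by rw [← pow_succ']

theorem stmt13 {R : Type*} [Ring R] (a b c d : R) (n : ℕ)
    (h1 : a * c * d = d * b * d) (h2 : d * b * a = a * c * a) :
    a * (∑ i ∈ Finset.Icc 1 n, (-1 : R) ^ (i - 1) * (n.choose i : R) * (c * (a * c) ^ (i - 1))) * d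
      = d * (∑ i ∈ Finset.Icc 1 n, (-1 : R) ^ (i - 1) * (n.choose i : R) * ((b * d) ^ (i - 1) * b)) * d ∧
    d * (∑ i ∈ Finset.Icc 1 n, (-1 : R) ^ (i - 1) * (n.choose i : R) * ((b * d) ^ (i - 1) * b)) * a
      = a * (∑ i ∈ Finset.Icc 1 n, (-1 : R) ^ (i - 1) * (n.choose i : R) * (c * (a * c) ^ (i - 1))) * a := by
  have hcomm : ∀ (x : R) (j : ℕ), x * ((-1 : R) ^ j * (n.choose (j + 1) : R))
      = ((-1 : R) ^ j * (n.choose (j + 1) : R)) * x := fun x j =>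
    (((Commute.neg_one_right x).pow_right j).mul_right (Nat.commute_cast x _)).eq
  have hterm1 : ∀ i ∈ Finset.Icc 1 n,
      a * ((-1 : R) ^ (i - 1) * (n.choose i : R) * (c * (a * c) ^ (i - 1))) * d
        = d * ((-1 : R) ^ (i - 1) * (n.choose i : R) * ((b * d) ^ (i - 1) * b)) * d := by
    intro i hi
    obtain ⟨j, rfl⟩ : ∃ j, i = j + 1 := by
      rcases Nat.exists_eq_add_of_le (Finset.mem_Icc.mp hi).1 with ⟨j, hj⟩
      exact ⟨j, by omega⟩
    simp only [Nat.add_sub_cancel]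
    rw [pull _ a d _ (hcomm a j), pull _ d d _ (hcomm d j)]
    congr 1
    rw [show a * (c * (a * c) ^ j) = (a * c) ^ (j + 1) from by
          rw [pow_succ']; exact (mul_assoc a c _).symm,
        key1 a b c d h1 j, ← hBlem b d j]
  have hterm2 : ∀ i ∈ Finset.Icc 1 n,
      d * ((-1 : R) ^ (i - 1) * (n.choose i : R) * ((b * d) ^ (i - 1) * b)) * a
        = a * ((-1 : R) ^ (i - 1) * (n.choose i : R) * (c * (a * c) ^ (i - 1))) * a := by
    intro i hi
    obtain ⟨j, rfl⟩ : ∃ j, i = j + 1 := by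
      rcases Nat.exists_eq_add_of_le (Finset.mem_Icc.mp hi).1 with ⟨j, hj⟩
      exact ⟨j, by omega⟩
    simp only [Nat.add_sub_cancel]
    rw [pull _ d a _ (hcomm d j), pull _ a a _ (hcomm a j)]
    congr 1
    rw [hBlem b d j, key2 a b c d h2 j, ← show a * (c * (a * c) ^ j) = (a * c) ^ (j + 1) from by
          rw [pow_succ']; exact (mul_assoc a c _).symm]
  constructor
  · rw [Finset.mul_sum, Finset.sum_mul, Finset.mul_sum, Finset.sum_mul]
    exact Finset.sum_congr rfl hterm1
  · rw [Finset.mul_sum, Finset.sum_mul, Finset.mul_sum, Finset.sum_mul]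
    exact Finset.sum_congr rfl hterm2
end

section
/- Let R be a ring, a, b, c, d ∈ R with acd = dbd and bdb = bac, n ∈ ℕ. Set c' = ∑_{i=1}^{n} (−1)^{i−1} C(n,i) c(ac)^{i−1} and b' = ∑_{i=1}^{n} (−1)^{i−1} C(n,i) (bd)^{i−1}b. Then ac'd = db'd and b'db' = b'ac'. -/
private lemma swap_pow {R : Type*} [Ring R] (x y : R) :
    ∀ k : ℕ, x * (y * x) ^ k = (x * y) ^ k * x := by
  intro k
  induction k with
  | zero => simp
  | succ k ih =>
    calc x * (y * x) ^ (k + 1) = (x * y) * (x * (y * x) ^ k) := by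
          rw [pow_succ']; simp only [mul_assoc]
      _ = (x * y) * ((x * y) ^ k * x) := by rw [ih]
      _ = (x * y) ^ (k + 1) * x := by rw [pow_succ']; simp only [mul_assoc]

private lemma lem1 {R : Type*} [Ring R] {a b c d : R} (h1 : a * c * d = d * b * d) :
    ∀ k : ℕ, (a * c) ^ (k + 1) * d = (d * b) ^ (k + 1) * d := by
  intro k
  induction k with
  | zero => simpa using h1
  | succ k ih =>
    calc (a * c) ^ (k + 1 + 1) * d = (a * c) ^ (k + 1) * (a * c * d) := by
          rw [pow_succ]; simp only [mul_assoc]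
      _ = (a * c) ^ (k + 1) * (d * b * d) := by rw [h1]
      _ = ((a * c) ^ (k + 1) * d) * (b * d) := by simp only [mul_assoc]
      _ = ((d * b) ^ (k + 1) * d) * (b * d) := by rw [ih]
      _ = (d * b) ^ (k + 1 + 1) * d := by
          conv_rhs => rw [pow_succ]
          simp only [mul_assoc]

private lemma lem2 {R : Type*} [Ring R] {a b c d : R} (h2 : b * d * b = b * a * c) :
    ∀ k : ℕ, b * (d * b) ^ (k + 1) = b * (a * c) ^ (k + 1) := by
  intro k
  induction k with
  | zero =>
    have h : b * (d * b) = b * (a * c) := by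
      simpa only [mul_assoc] using h2
    simpa using h
  | succ k ih =>
    symm
    calc b * (a * c) ^ (k + 1 + 1) = (b * (a * c) ^ (k + 1)) * (a * c) := by
          rw [pow_succ]; simp only [mul_assoc]
      _ = (b * (d * b) ^ (k + 1)) * (a * c) := by rw [← ih]
      _ = (b * (d * b) ^ k) * (d * (b * a * c)) := by
          rw [pow_succ]; simp only [mul_assoc]
      _ = (b * (d * b) ^ k) * (d * (b * d * b)) := by rw [← h2]
      _ = b * (d * b) ^ (k + 1 + 1) := by rw [pow_succ, pow_succ]; simp only [mul_assoc]

theorem stmt14 {R : Type*} [Ring R] (a b c d : R) (n : ℕ)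
    (h1 : a * c * d = d * b * d) (h2 : b * d * b = b * a * c) :
    a * (∑ i ∈ Finset.Icc 1 n, (-1 : R) ^ (i - 1) * (n.choose i : R) * (c * (a * c) ^ (i - 1))) * d
      = d * (∑ i ∈ Finset.Icc 1 n, (-1 : R) ^ (i - 1) * (n.choose i : R) * ((b * d) ^ (i - 1) * b)) * d ∧
    (∑ i ∈ Finset.Icc 1 n, (-1 : R) ^ (i - 1) * (n.choose i : R) * ((b * d) ^ (i - 1) * b)) * d *
        (∑ i ∈ Finset.Icc 1 n, (-1 : R) ^ (i - 1) * (n.choose i : R) * ((b * d) ^ (i - 1) * b))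
      = (∑ i ∈ Finset.Icc 1 n, (-1 : R) ^ (i - 1) * (n.choose i : R) * ((b * d) ^ (i - 1) * b)) * a *
        (∑ i ∈ Finset.Icc 1 n, (-1 : R) ^ (i - 1) * (n.choose i : R) * (c * (a * c) ^ (i - 1))) := by
  set C : ℕ → R := fun i => (-1 : R) ^ (i - 1) * (n.choose i : R) with hCdef
  have hC : ∀ (i : ℕ) (x : R), x * C i = C i * x := by
    intro i x
    exact (((Commute.neg_one_left x).pow_left _).mul_left (Nat.cast_commute _ _)).eq.symm
  have key1 : ∀ k : ℕ, a * (c * (a * c) ^ k) * d = d * ((b * d) ^ k * b) * d := by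
    intro k
    have ha : a * (c * (a * c) ^ k) = (a * c) ^ (k + 1) := by
      rw [pow_succ', mul_assoc]
    have hd : d * ((b * d) ^ k * b) = (d * b) ^ (k + 1) := by
      rw [← mul_assoc, swap_pow d b k, pow_succ, mul_assoc]
    rw [ha, hd, lem1 h1]
  have key2 : ∀ k l : ℕ, ((b * d) ^ k * b) * d * ((b * d) ^ l * b)
      = ((b * d) ^ k * b) * a * (c * (a * c) ^ l) := by
    intro k l
    have hb : b * d * ((b * d) ^ l * b) = b * a * (c * (a * c) ^ l) := by
      calc b * d * ((b * d) ^ l * b) = (b * d) ^ (l + 1) * b := by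
            rw [pow_succ']; simp only [mul_assoc]
        _ = b * (d * b) ^ (l + 1) := (swap_pow b d (l + 1)).symm
        _ = b * (a * c) ^ (l + 1) := lem2 h2 l
        _ = b * a * (c * (a * c) ^ l) := by rw [pow_succ']; simp only [mul_assoc]
    calc ((b * d) ^ k * b) * d * ((b * d) ^ l * b)
        = (b * d) ^ k * (b * d * ((b * d) ^ l * b)) := by simp only [mul_assoc]
      _ = (b * d) ^ k * (b * a * (c * (a * c) ^ l)) := by rw [hb]
      _ = ((b * d) ^ k * b) * a * (c * (a * c) ^ l) := by simp only [mul_assoc]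
  have move : ∀ (i : ℕ) (u y : R), u * (C i * y) = C i * (u * y) := by
    intro i u y
    rw [← mul_assoc, hC i u, mul_assoc]
  constructor
  · rw [Finset.mul_sum, Finset.sum_mul, Finset.mul_sum, Finset.sum_mul]
    refine Finset.sum_congr rfl fun i _ => ?_
    calc a * (C i * (c * (a * c) ^ (i - 1))) * d
        = C i * (a * (c * (a * c) ^ (i - 1)) * d) := by
          rw [move, mul_assoc (C i)]
      _ = C i * (d * ((b * d) ^ (i - 1) * b) * d) := by rw [key1]
      _ = d * (C i * ((b * d) ^ (i - 1) * b)) * d := by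
          rw [move, mul_assoc (C i)]
  · simp only [Finset.sum_mul, Finset.mul_sum]
    refine Finset.sum_congr rfl fun i _ => Finset.sum_congr rfl fun j _ => ?_
    show (C j * ((b * d) ^ (j - 1) * b)) * d * (C i * ((b * d) ^ (i - 1) * b))
        = (C j * ((b * d) ^ (j - 1) * b)) * a * (C i * (c * (a * c) ^ (i - 1)))
    rw [move i ((C j * ((b * d) ^ (j - 1) * b)) * d) ((b * d) ^ (i - 1) * b),
        move i ((C j * ((b * d) ^ (j - 1) * b)) * a) (c * (a * c) ^ (i - 1))]
    refine congrArg _ ?_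
    calc (C j * ((b * d) ^ (j - 1) * b)) * d * ((b * d) ^ (i - 1) * b)
        = C j * (((b * d) ^ (j - 1) * b) * d * ((b * d) ^ (i - 1) * b)) := by
          simp only [mul_assoc]
      _ = C j * (((b * d) ^ (j - 1) * b) * a * (c * (a * c) ^ (i - 1))) := by rw [key2]
      _ = (C j * ((b * d) ^ (j - 1) * b)) * a * (c * (a * c) ^ (i - 1)) := by
          simp only [mul_assoc]
end

section
/- Let R be a ring, c, a ∈ R, α = 1 − ac, p an idempotent commuting with α such that 1 − (1−p)α is a unit, and let r = ((1−p)(1 − (1−p)α)^{−1} − 1)a. Then rc = α − p. Consequently, if α − p is quasinilpotent, then cr is quasinilpotent. -/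
/-- Jacobson's lemma: `1 + s*t` is a unit iff `1 + t*s` is. -/
lemma jacobson_aux {R : Type*} [Ring R] (s t : R) (h : IsUnit (1 + s * t)) :
    IsUnit (1 + t * s) := by
  obtain ⟨v, hv1, hv2⟩ := isUnit_iff_exists.mp h
  refine isUnit_iff_exists.mpr ⟨1 - t * v * s, ?_, ?_⟩
  · have : (1 + t * s) * (1 - t * v * s) = 1 + t * (1 - (1 + s * t) * v) * s := by
      noncomm_ring
    rw [this, hv1]; noncomm_ring
  · have : (1 - t * v * s) * (1 + t * s) = 1 + t * (1 - v * (1 + s * t)) * s := by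
      noncomm_ring
    rw [this, hv2]; noncomm_ring

/-- If `x*y` is quasinilpotent then so is `y*x`. -/
lemma quasi_swap {R : Type*} [Ring R] (x y : R) (h : Quasinilpotent (x * y)) :
    Quasinilpotent (y * x) := by
  intro z hz
  -- hz : y*x*z = z*(y*x)
  have hzz : (y * x) * (z * z) = (z * z) * (y * x) := by
    calc y * x * (z * z) = (y * x * z) * z := by noncomm_ring
    _ = (z * (y * x)) * z := by rw [hz]
    _ = z * (y * x * z) := by noncomm_ring
    _ = z * (z * (y * x)) := by rw [hz]
    _ = (z * z) * (y * x) := by noncomm_ring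
  -- w := x * (-(z*z)) * y commutes with x*y
  have hw : (x * y) * (x * (-(z * z)) * y) = (x * (-(z * z)) * y) * (x * y) := by
    have : x * ((y * x) * (z * z)) * y = x * ((z * z) * (y * x)) * y := by rw [hzz]
    calc (x * y) * (x * (-(z * z)) * y) = -(x * ((y * x) * (z * z)) * y) := by noncomm_ring
    _ = -(x * ((z * z) * (y * x)) * y) := by rw [hzz]
    _ = (x * (-(z * z)) * y) * (x * y) := by noncomm_ring
  have h1 : IsUnit (1 + (x * y) * (x * (-(z * z)) * y)) := h _ hw
  have h2 : IsUnit (1 + y * (x * y * x * (-(z * z)))) := by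
    have := jacobson_aux (x * y * x * (-(z * z))) y ?_
    · exact this
    · have e : 1 + x * y * x * (-(z * z)) * y = 1 + (x * y) * (x * (-(z * z)) * y) := by
        noncomm_ring
      rw [e]; exact h1
  -- h2 : IsUnit (1 - (y*x)^2 * z^2)
  have hprod : (1 + (y * x) * z) * (1 - (y * x) * z) = 1 + y * (x * y * x * (-(z * z))) := by
    have e : (1 + (y * x) * z) * (1 - (y * x) * z) = 1 - (y * x) * (z * (y * x)) * z := by
      noncomm_ring
    rw [e, ← hz]; noncomm_ring
  have hcomm' : Commute (1 + (y * x) * z) (1 - (y * x) * z) := by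
    unfold Commute SemiconjBy; noncomm_ring
  have : IsUnit ((1 + (y * x) * z) * (1 - (y * x) * z)) := by rw [hprod]; exact h2
  exact (hcomm'.isUnit_mul_iff.mp this).1

theorem stmt17 {R : Type*} [Ring R] (c a p : R) (hp : p * p = p)
    (hcomm : p * (1 - a * c) = (1 - a * c) * p)
    (u : Rˣ) (hu : (u : R) = 1 - (1 - p) * (1 - a * c)) :
    (((1 - p) * (↑u⁻¹ : R) - 1) * a) * c = (1 - a * c) - p ∧
    (Quasinilpotent ((1 - a * c) - p) →
      Quasinilpotent (c * (((1 - p) * (↑u⁻¹ : R) - 1) * a))) := by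
  -- p commutes with a*c
  have hpac : p * (a * c) = (a * c) * p := by
    have h1 : p - p * (a * c) = p - (a * c) * p := by
      calc p - p * (a * c) = p * (1 - a * c) := by noncomm_ring
      _ = (1 - a * c) * p := hcomm
      _ = p - (a * c) * p := by noncomm_ring
    exact sub_right_injective h1
  -- (1-p) * u = (1-p) * (a*c)
  have key : (1 - p) * (u : R) = (1 - p) * (a * c) := by
    rw [hu]
    have e : (1 - p) * (1 - (1 - p) * (1 - a * c)) =
        (1 - p) * (a * c) + (p - p * p) * (1 - a * c) := by noncomm_ring
    rw [e, hp]; noncomm_ring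
  -- u commutes with a*c
  have huac : (u : R) * (a * c) = (a * c) * (u : R) := by
    rw [hu]
    have e1 : (1 - (1 - p) * (1 - a * c)) * (a * c)
        = a * c - (1 - p) * ((a * c) - (a * c) * (a * c)) := by noncomm_ring
    have e2 : (a * c) * (1 - (1 - p) * (1 - a * c))
        = a * c - ((a * c) - (a * c) * (a * c)) + ((a * c) * p) * (1 - a * c) := by
      noncomm_ring
    rw [e1, e2, ← hpac]
    noncomm_ring
  have huinv : (↑u⁻¹ : R) * (a * c) = (a * c) * (↑u⁻¹ : R) := by
    have hc : Commute (u : R) (a * c) := huac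
    exact (hc.units_inv_left).eq
  have main : (((1 - p) * (↑u⁻¹ : R) - 1) * a) * c = (1 - a * c) - p := by
    have e : (((1 - p) * (↑u⁻¹ : R) - 1) * a) * c
        = (1 - p) * ((↑u⁻¹ : R) * (a * c)) - a * c := by noncomm_ring
    rw [e, huinv, ← mul_assoc, ← key, mul_assoc, Units.mul_inv]
    noncomm_ring
  refine ⟨main, fun hq => ?_⟩
  have : Quasinilpotent ((((1 - p) * (↑u⁻¹ : R) - 1) * a) * c) := by rw [main]; exact hq
  exact quasi_swap _ _ this
end
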